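/- arXiv:1704.08681 — 4 statements merged into one kernel-verified Lean document; each statement's English description precedes it below -/
import Mathlib

section
/- Let Λ ∈ ℝ and let r, m̃, τ, τ̄ be smooth real-valued functions on an open set U ⊂ ℝ² (coordinates (u,v)) with r > 0, ∂_u r < 0 < ∂_v r, and 1 - 2m̃/r - (Λ/3)r² > 0 on U. Set D := 1 - 2m̃/r - (Λ/3)r². Assume the equations: (i) ∂_u m̃ = -2π (D/(-∂_u r)) τ; (ii) ∂_v m̃ = 2π (D/∂_v r) τ̄; (iii) ∂_u τ̄ = 0; (iv) ∂_u log(∂_v r / D) = -4π τ / (r(-∂_u r)). Then m̃ satisfies the wave-type equation ∂_u ∂_v m̃ = -F(r, m̃) ∂_u m̃ ∂_v m̃, where F(r, m̃) = 2/(r - 2m̃ - (Λ/3)r³). -/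
/-- Partial derivative in the first (`u`) variable. -/
noncomputable def pu (f : ℝ → ℝ → ℝ) (u v : ℝ) : ℝ := deriv (fun u' => f u' v) u

/-- Partial derivative in the second (`v`) variable. -/
noncomputable def pv (f : ℝ → ℝ → ℝ) (u v : ℝ) : ℝ := deriv (fun v' => f u v') v

/-- Differentiability along a horizontal (`u`) line of a smooth function. -/
private lemma diff_u {U : Set (ℝ × ℝ)} (hU : IsOpen U) {f : ℝ → ℝ → ℝ}
    (hf : ContDiffOn ℝ (⊤ : ℕ∞) (fun p : ℝ × ℝ => f p.1 p.2) U) {u v : ℝ} (h : (u, v) ∈ U) :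
    DifferentiableAt ℝ (fun u' => f u' v) u := by
  have hF : DifferentiableAt ℝ (fun p : ℝ × ℝ => f p.1 p.2) (u, v) :=
    (hf.contDiffAt (hU.mem_nhds h)).differentiableAt (by simp)
  have hg : DifferentiableAt ℝ (fun u' : ℝ => (u', v)) u :=
    differentiableAt_id.prodMk (differentiableAt_const v)
  exact hF.comp u hg

/-- The vertical partial derivative equals the full Fréchet derivative applied to `(0,1)`. -/
private lemma pv_eq_fderiv {U : Set (ℝ × ℝ)} (hU : IsOpen U) {f : ℝ → ℝ → ℝ}
    (hf : ContDiffOn ℝ (⊤ : ℕ∞) (fun p : ℝ × ℝ => f p.1 p.2) U) {u v : ℝ} (h : (u, v) ∈ U) :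
    pv f u v = fderiv ℝ (fun p : ℝ × ℝ => f p.1 p.2) (u, v) (0, 1) := by
  have hF : DifferentiableAt ℝ (fun p : ℝ × ℝ => f p.1 p.2) (u, v) :=
    (hf.contDiffAt (hU.mem_nhds h)).differentiableAt (by simp)
  have hline : HasDerivAt (fun v' : ℝ => ((u, v') : ℝ × ℝ)) ((0 : ℝ), (1 : ℝ)) v :=
    (hasDerivAt_const v u).prodMk (hasDerivAt_id v)
  have := hF.hasFDerivAt.comp_hasDerivAt v hline
  exact this.deriv

/-- Smoothness of the vertical partial derivative. -/
private lemma pv_smooth {U : Set (ℝ × ℝ)} (hU : IsOpen U) {f : ℝ → ℝ → ℝ}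
    (hf : ContDiffOn ℝ (⊤ : ℕ∞) (fun p : ℝ × ℝ => f p.1 p.2) U) :
    ContDiffOn ℝ (⊤ : ℕ∞) (fun p : ℝ × ℝ => pv f p.1 p.2) U := by
  have h1 : ContDiffOn ℝ (⊤ : ℕ∞) (fderiv ℝ (fun p : ℝ × ℝ => f p.1 p.2)) U :=
    hf.fderiv_of_isOpen hU (by simp)
  have h2 : ContDiffOn ℝ (⊤ : ℕ∞)
      (fun p : ℝ × ℝ => fderiv ℝ (fun q : ℝ × ℝ => f q.1 q.2) p ((0 : ℝ), (1 : ℝ))) U := by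
    exact ((ContinuousLinearMap.apply ℝ ℝ ((0 : ℝ), (1 : ℝ))).contDiff).comp_contDiffOn h1
  exact h2.congr fun p hp => pv_eq_fderiv hU hf (by simpa using hp)

/-- Derivation of the wave-type equation for the renormalised Hawking mass `m̃` from
the spherically symmetric Einstein–null dust equations:
`∂_u ∂_v m̃ = -F(r, m̃) ∂_u m̃ ∂_v m̃` with `F(r, m̃) = 2/(r - 2m̃ - (Λ/3) r³)`. -/
theorem wave_equation_renormalised_mass (Λ : ℝ) (U : Set (ℝ × ℝ)) (hU : IsOpen U)
    (r mt τ τb D : ℝ → ℝ → ℝ)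
    (hDdef : ∀ u v : ℝ, D u v = 1 - 2 * mt u v / r u v - Λ / 3 * (r u v) ^ 2)
    (hrs : ContDiffOn ℝ (⊤ : ℕ∞) (fun p : ℝ × ℝ => r p.1 p.2) U)
    (hms : ContDiffOn ℝ (⊤ : ℕ∞) (fun p : ℝ × ℝ => mt p.1 p.2) U)
    (hτs : ContDiffOn ℝ (⊤ : ℕ∞) (fun p : ℝ × ℝ => τ p.1 p.2) U)
    (hτbs : ContDiffOn ℝ (⊤ : ℕ∞) (fun p : ℝ × ℝ => τb p.1 p.2) U)
    (hrpos : ∀ p ∈ U, 0 < r p.1 p.2)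
    (hdu : ∀ p ∈ U, pu r p.1 p.2 < 0)
    (hdv : ∀ p ∈ U, 0 < pv r p.1 p.2)
    (hDpos : ∀ p ∈ U, 0 < D p.1 p.2)
    (h1 : ∀ p ∈ U, pu mt p.1 p.2
      = -(2 * Real.pi) * (D p.1 p.2 / (-(pu r p.1 p.2))) * τ p.1 p.2)
    (h2 : ∀ p ∈ U, pv mt p.1 p.2
      = 2 * Real.pi * (D p.1 p.2 / pv r p.1 p.2) * τb p.1 p.2)
    (h3 : ∀ p ∈ U, pu τb p.1 p.2 = 0)
    (h4 : ∀ p ∈ U, pu (fun u v => Real.log (pv r u v / D u v)) p.1 p.2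
      = -(4 * Real.pi) * τ p.1 p.2 / (r p.1 p.2 * (-(pu r p.1 p.2)))) :
    ∀ p ∈ U, pu (fun u v => pv mt u v) p.1 p.2
      = -(2 / (r p.1 p.2 - 2 * mt p.1 p.2 - Λ / 3 * (r p.1 p.2) ^ 3))
          * pu mt p.1 p.2 * pv mt p.1 p.2 := by
  rintro ⟨u, v⟩ hp
  simp only
  -- basic positivity facts at the point
  have hr0 : (0 : ℝ) < r u v := hrpos (u, v) hp
  have hru0 : pu r u v < 0 := hdu (u, v) hp
  have hrv0 : (0 : ℝ) < pv r u v := hdv (u, v) hp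
  have hD0 : (0 : ℝ) < D u v := hDpos (u, v) hp
  -- eventual membership of the horizontal slice
  have hev : ∀ᶠ u' in nhds u, (u', v) ∈ U := by
    have hc : Continuous fun u' : ℝ => ((u', v) : ℝ × ℝ) :=
      continuous_id.prodMk continuous_const
    have : (fun u' : ℝ => ((u', v) : ℝ × ℝ)) ⁻¹' U ∈ nhds u :=
      (hU.preimage hc).mem_nhds (by simpa using hp)
    exact Filter.eventually_iff_exists_mem.mpr ⟨_, this, fun _ h => h⟩
  -- smoothness of pv r
  have hpvr : ContDiffOn ℝ (⊤ : ℕ∞) (fun p : ℝ × ℝ => pv r p.1 p.2) U := pv_smooth hU hrs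
  -- differentiability of all ingredients along the u-line
  have hd_r : DifferentiableAt ℝ (fun u' => r u' v) u := diff_u hU hrs hp
  have hd_mt : DifferentiableAt ℝ (fun u' => mt u' v) u := diff_u hU hms hp
  have hd_τb : DifferentiableAt ℝ (fun u' => τb u' v) u := diff_u hU hτbs hp
  have hd_pvr : DifferentiableAt ℝ (fun u' => pv r u' v) u := diff_u hU hpvr hp
  have hd_D : DifferentiableAt ℝ (fun u' => D u' v) u := by
    have hEq : (fun u' => D u' v)
        = fun u' => 1 - 2 * mt u' v / r u' v - Λ / 3 * (r u' v) ^ 2 := by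
      funext u'; exact hDdef u' v
    rw [hEq]
    exact ((differentiableAt_const 1).sub
      ((hd_mt.const_mul 2).div hd_r hr0.ne')).sub ((hd_r.pow 2).const_mul (Λ / 3))
  -- the logarithmic quantity
  set g : ℝ → ℝ := fun u' => Real.log (pv r u' v / D u' v) with hg_def
  have hd_ratio : DifferentiableAt ℝ (fun u' => pv r u' v / D u' v) u :=
    hd_pvr.div hd_D hD0.ne'
  have hd_g : DifferentiableAt ℝ g u :=
    hd_ratio.log (by positivity)
  -- φ = D / pv r  equals  exp (-g) near u
  set φ : ℝ → ℝ := fun u' => D u' v / pv r u' v with hφ_def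
  have hφeq : φ =ᶠ[nhds u] fun u' => Real.exp (-(g u')) := by
    filter_upwards [hev] with u' hu'
    have h1' : (0 : ℝ) < pv r u' v := hdv (u', v) hu'
    have h2' : (0 : ℝ) < D u' v := hDpos (u', v) hu'
    simp only [hφ_def, hg_def]
    rw [← Real.log_inv, Real.exp_log (by positivity), inv_div]
  -- derivative of φ via the chain rule and h4
  have hgderiv : deriv g u = -(4 * Real.pi) * τ u v / (r u v * (-(pu r u v))) := by
    have := h4 (u, v) hp
    simpa [pu, hg_def] using this
  have hexp : HasDerivAt (fun u' => Real.exp (-(g u')))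
      (Real.exp (-(g u)) * (-(deriv g u))) u :=
    (hd_g.hasDerivAt.neg).exp
  have hφ' : HasDerivAt φ (Real.exp (-(g u)) * (-(deriv g u))) u :=
    hexp.congr_of_eventuallyEq hφeq
  have hφu : Real.exp (-(g u)) = φ u := by
    simp only [hφ_def, hg_def]
    rw [← Real.log_inv, Real.exp_log (by positivity), inv_div]
  have hφ'' : HasDerivAt φ (φ u * (4 * Real.pi * τ u v / (r u v * (-(pu r u v))))) u := by
    have : Real.exp (-(g u)) * (-(deriv g u))
        = φ u * (4 * Real.pi * τ u v / (r u v * (-(pu r u v)))) := by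
      rw [hφu, hgderiv]; ring
    rwa [this] at hφ'
  -- derivative of τb along u is 0
  have hτb' : HasDerivAt (fun u' => τb u' v) 0 u := by
    have := hd_τb.hasDerivAt
    rwa [show deriv (fun u' => τb u' v) u = 0 from h3 (u, v) hp] at this
  -- full derivative of the product
  have hprod : HasDerivAt (fun u' => 2 * Real.pi * φ u' * τb u' v)
      ((2 * Real.pi * (φ u * (4 * Real.pi * τ u v / (r u v * (-(pu r u v)))))) * τb u v
        + 2 * Real.pi * φ u * 0) u :=
    (hφ''.const_mul (2 * Real.pi)).mul hτb'
  -- rewrite the outer derivative using h2 on a neighbourhood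
  have hmain : pu (fun u v => pv mt u v) u v
      = (2 * Real.pi * (φ u * (4 * Real.pi * τ u v / (r u v * (-(pu r u v)))))) * τb u v := by
    have heq : (fun u' => pv mt u' v) =ᶠ[nhds u] fun u' => 2 * Real.pi * φ u' * τb u' v := by
      filter_upwards [hev] with u' hu'
      simpa [hφ_def] using h2 (u', v) hu'
    have : pu (fun u v => pv mt u v) u v = deriv (fun u' => 2 * Real.pi * φ u' * τb u' v) u :=
      heq.deriv_eq
    rw [this, hprod.deriv]; ring
  -- now pure algebra
  rw [hmain, h1 (u, v) hp, h2 (u, v) hp]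
  have hrD : r u v - 2 * mt u v - Λ / 3 * (r u v) ^ 3 = r u v * D u v := by
    rw [hDdef u v]; field_simp
  rw [hrD]
  simp only [hφ_def]
  have hru' : pu r u v ≠ 0 := hru0.ne
  field_simp
  ring
end

section
/- Let u₀ < u₁, v₀ < v₁, let F be a smooth real-valued function on [u₀,u₁] × [v₀,v₁] × ℝ, and let z : [u₀,u₁] × [v₀,v₁] → ℝ be a smooth solution of ∂_v ∂_u z = -F(u,v,z) ∂_u z ∂_v z. Suppose the initial data satisfy ∂_u z(u, v₀) < 0 for all u ∈ (u₀,u₁) and ∂_v z(u₀, v) > 0 for all v ∈ (v₀,v₁). Then ∂_u z < 0 and ∂_v z > 0 everywhere in the open rectangle (u₀,u₁) × (v₀,v₁). -/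
open Set Filter Topology


/-- Sign preservation for a linear ODE `g' = c·g`. -/
lemma ode_sign {g c : ℝ → ℝ} {s : Set ℝ} (hs : IsOpen s) {a b : ℝ} (hab : a ≤ b)
    (hsub : Icc a b ⊆ s) (hc : ContinuousOn c s)
    (hg : ∀ t ∈ Icc a b, HasDerivAt g (c t * g t) t) (ha : g a < 0) : g b < 0 := by
  set A : ℝ → ℝ := fun t => ∫ x in a..t, c x with hA
  have hci : ∀ t ∈ Icc a b, IntervalIntegrable c MeasureTheory.volume a t := by
    intro t ht
    apply (hc.mono (fun x hx => hsub (?_ : x ∈ Icc a b))).intervalIntegrable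
    exact ⟨le_trans (le_min le_rfl ht.1) hx.1, le_trans hx.2 (max_le hab ht.2)⟩
  have hder : ∀ t ∈ Icc a b, HasDerivAt A (c t) t := by
    intro t ht
    exact intervalIntegral.integral_hasDerivAt_right (hci t ht)
      (hc.stronglyMeasurableAtFilter hs t (hsub ht)) ((hc t (hsub ht)).continuousAt
        (hs.mem_nhds (hsub ht)))
  have key : ∀ t ∈ Icc a b, g t * Real.exp (-A t) = g a * Real.exp (-A a) := by
    apply constant_of_has_deriv_right_zero
    · intro t ht
      exact ((hg t ht).continuousAt.continuousWithinAt).mul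
        (((hder t ht).continuousAt.neg.rexp).continuousWithinAt)
    · intro t ht
      have ht' : t ∈ Icc a b := ⟨ht.1, ht.2.le⟩
      have : HasDerivAt (fun t => g t * Real.exp (-A t))
          (c t * g t * Real.exp (-A t) + g t * (Real.exp (-A t) * (-(c t)))) t :=
        (hg t ht').mul (((hder t ht').neg).exp)
      have h0 : c t * g t * Real.exp (-A t) + g t * (Real.exp (-A t) * (-(c t))) = 0 := by ring
      exact (h0 ▸ this).hasDerivWithinAt
  have hb := key b ⟨hab, le_rfl⟩
  have : A a = 0 := by simp [hA]
  rw [this] at hb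
  simp only [neg_zero, Real.exp_zero, mul_one] at hb
  nlinarith [Real.exp_pos (-A b)]

lemma slice1 {z : ℝ → ℝ → ℝ} {u v : ℝ} {L : ℝ × ℝ →L[ℝ] ℝ}
    (h : HasFDerivAt (fun p : ℝ × ℝ => z p.1 p.2) L (u, v)) :
    HasDerivAt (fun u' => z u' v) (L (1, 0)) u :=
  by have := h.comp_hasDerivAt u (HasDerivAt.prodMk (hasDerivAt_id u) (hasDerivAt_const u v)); exact this

lemma slice2 {z : ℝ → ℝ → ℝ} {u v : ℝ} {L : ℝ × ℝ →L[ℝ] ℝ}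
    (h : HasFDerivAt (fun p : ℝ × ℝ => z p.1 p.2) L (u, v)) :
    HasDerivAt (fun v' => z u v') (L (0, 1)) v :=
  h.comp_hasDerivAt v (HasDerivAt.prodMk (hasDerivAt_const v u) (hasDerivAt_id v))

/-- Schwarz symmetry of mixed partial derivatives, on an open set. -/
lemma mixed_symm {z : ℝ → ℝ → ℝ} {u v : ℝ} {O : Set (ℝ × ℝ)} (hO : IsOpen O)
    (hmem : (u, v) ∈ O) (h : ContDiffOn ℝ 2 (fun p : ℝ × ℝ => z p.1 p.2) O) :
    pv (fun u' v' => pu z u' v') u v = pu (fun u' v' => pv z u' v') u v := by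
  set Z : ℝ × ℝ → ℝ := fun p => z p.1 p.2 with hZdef
  have hZ : ∀ p ∈ O, ContDiffAt ℝ 2 Z p := fun p hp => h.contDiffAt (hO.mem_nhds hp)
  have hdiff : ∀ p ∈ O, DifferentiableAt ℝ Z p :=
    fun p hp => (hZ p hp).differentiableAt two_ne_zero
  have hpu : ∀ p ∈ O, pu z p.1 p.2 = fderiv ℝ Z p (1, 0) :=
    fun p hp => (slice1 (hdiff p hp).hasFDerivAt).deriv
  have hpv : ∀ p ∈ O, pv z p.1 p.2 = fderiv ℝ Z p (0, 1) :=
    fun p hp => (slice2 (hdiff p hp).hasFDerivAt).deriv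
  have hφ : ContDiffAt ℝ 1 (fderiv ℝ Z) (u, v) :=
    (hZ _ hmem).fderiv_right (le_refl 2)
  have hφd : DifferentiableAt ℝ (fderiv ℝ Z) (u, v) := hφ.differentiableAt one_ne_zero
  set H := fderiv ℝ (fderiv ℝ Z) (u, v) with hHdef
  -- second mixed partial, v then u
  have h1 : deriv (fun v' => pu z u v') v = H (0, 1) (1, 0) := by
    have h2 : HasDerivAt (fun v' => fderiv ℝ Z (u, v')) (H (0, 1)) v :=
      hφd.hasFDerivAt.comp_hasDerivAt v (HasDerivAt.prodMk (hasDerivAt_const v u) (hasDerivAt_id v))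
    have h3 : HasDerivAt (fun v' => fderiv ℝ Z (u, v') ((1:ℝ), (0:ℝ)))
        (H (0, 1) (1, 0)) v := by
      have := h2.clm_apply (hasDerivAt_const v ((1:ℝ), (0:ℝ)))
      simpa using this
    have hev : (fun v' => pu z u v') =ᶠ[𝓝 v] fun v' => fderiv ℝ Z (u, v') ((1:ℝ), (0:ℝ)) := by
      have : ∀ᶠ v' in 𝓝 v, (u, v') ∈ O :=
        (hO.preimage (continuous_const.prodMk continuous_id)).mem_nhds hmem
      filter_upwards [this] with v' hv' using hpu (u, v') hv'
    exact (h3.congr_of_eventuallyEq hev).deriv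
  have h1' : deriv (fun u' => pv z u' v) u = H (1, 0) (0, 1) := by
    have h2 : HasDerivAt (fun u' => fderiv ℝ Z (u', v)) (H (1, 0)) u :=
      hφd.hasFDerivAt.comp_hasDerivAt u (HasDerivAt.prodMk (hasDerivAt_id u) (hasDerivAt_const u v))
    have h3 : HasDerivAt (fun u' => fderiv ℝ Z (u', v) ((0:ℝ), (1:ℝ)))
        (H (1, 0) (0, 1)) u := by
      have := h2.clm_apply (hasDerivAt_const u ((0:ℝ), (1:ℝ)))
      simpa using this
    have hev : (fun u' => pv z u' v) =ᶠ[𝓝 u] fun u' => fderiv ℝ Z (u', v) ((0:ℝ), (1:ℝ)) := by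
      have : ∀ᶠ u' in 𝓝 u, (u', v) ∈ O :=
        (hO.preimage (continuous_id.prodMk continuous_const)).mem_nhds hmem
      filter_upwards [this] with u' hu' using hpv (u', v) hu'
    exact (h3.congr_of_eventuallyEq hev).deriv
  have hsymm : H (0, 1) (1, 0) = H (1, 0) (0, 1) :=
    (hZ _ hmem).isSymmSndFDerivAt (by simp [minSmoothness_of_isRCLikeNormedField]) (0, 1) (1, 0)
  show deriv (fun v' => pu z u v') v = deriv (fun u' => pv z u' v) u
  rw [h1, h1', hsymm]

/-- Core propagation lemma: negativity of `∂_u z` propagates in `v`. -/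
lemma core (u₀ u₁ v₀ v₁ : ℝ) (hu : u₀ < u₁) (hv : v₀ < v₁)
    (F : ℝ → ℝ → ℝ → ℝ) (z : ℝ → ℝ → ℝ)
    (hFc : Continuous fun p : ℝ × ℝ × ℝ => F p.1 p.2.1 p.2.2)
    (hzs : ContDiffOn ℝ 2 (fun p : ℝ × ℝ => z p.1 p.2) (Icc u₀ u₁ ×ˢ Icc v₀ v₁))
    (heq : ∀ u ∈ Ioo u₀ u₁, ∀ v ∈ Ioo v₀ v₁,
      pv (fun u' v' => pu z u' v') u v = -(F u v (z u v)) * (pu z u v * pv z u v))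
    (hinit : ∀ u ∈ Ioo u₀ u₁, pu z u v₀ < 0) :
    ∀ u ∈ Ioo u₀ u₁, ∀ v ∈ Ioo v₀ v₁, pu z u v < 0 := by
  intro u hu' v hv'
  set Z : ℝ × ℝ → ℝ := fun p => z p.1 p.2 with hZdef
  set S : Set (ℝ × ℝ) := Icc u₀ u₁ ×ˢ Icc v₀ v₁ with hSdef
  set T : Set (ℝ × ℝ) := Ioo u₀ u₁ ×ˢ Ioo v₀ v₁ with hTdef
  have hTo : IsOpen T := isOpen_Ioo.prod isOpen_Ioo
  have hTS : T ⊆ S := prod_mono Ioo_subset_Icc_self Ioo_subset_Icc_self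
  have hZT : ∀ p ∈ T, ContDiffAt ℝ 2 Z p :=
    fun p hp => ((hzs.mono hTS).contDiffAt (hTo.mem_nhds hp))
  set g : ℝ → ℝ := fun t => pu z u t with hgdef
  -- continuity of g on the closed interval, via fderivWithin
  have hUD : UniqueDiffOn ℝ S := (uniqueDiffOn_Icc hu).prod (uniqueDiffOn_Icc hv)
  set W : ℝ × ℝ → ℝ × ℝ →L[ℝ] ℝ := fderivWithin ℝ Z S with hWdef
  have hWc : ContinuousOn W S := hzs.continuousOn_fderivWithin hUD (by norm_num)
  have hpuW : ∀ t ∈ Icc v₀ v₁, g t = W (u, t) (1, 0) := by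
    intro t ht
    have hmem : (u, t) ∈ S := ⟨Ioo_subset_Icc_self hu', ht⟩
    have hfd : HasFDerivWithinAt Z (W (u, t)) S (u, t) :=
      ((hzs (u, t) hmem).differentiableWithinAt two_ne_zero).hasFDerivWithinAt
    have hι : HasDerivWithinAt (fun u' : ℝ => ((u' : ℝ), t)) ((1 : ℝ), (0 : ℝ))
        (Icc u₀ u₁) u := (HasDerivAt.prodMk (hasDerivAt_id u) (hasDerivAt_const u t)).hasDerivWithinAt
    have hcomp : HasDerivWithinAt (fun u' => z u' t) (W (u, t) (1, 0)) (Icc u₀ u₁) u :=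
      by have := hfd.comp_hasDerivWithinAt u hι (fun x hx => (⟨hx, ht⟩ : (x, t) ∈ S)); exact this
    exact (hcomp.hasDerivAt (Icc_mem_nhds hu'.1 hu'.2)).deriv
  have hgc : ContinuousOn g (Icc v₀ v₁) := by
    have : ContinuousOn (fun t => W (u, t) ((1 : ℝ), (0 : ℝ))) (Icc v₀ v₁) := by
      apply ContinuousOn.clm_apply _ continuousOn_const
      exact hWc.comp ((continuous_const.prodMk continuous_id).continuousOn)
        (fun t ht => ⟨Ioo_subset_Icc_self hu', ht⟩)
    exact this.congr hpuW
  -- find a starting point a with v₀ < a < v and g a < 0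
  have hga : g v₀ < 0 := hinit u hu'
  have hIoo : Ioo v₀ v ⊆ Icc v₀ v₁ := fun x hx => ⟨hx.1.le, hx.2.le.trans hv'.2.le⟩
  have hcw : ContinuousWithinAt g (Ioo v₀ v) v₀ :=
    (hgc v₀ ⟨le_rfl, hv.le⟩).mono hIoo
  have hev : ∀ᶠ t in 𝓝[Ioo v₀ v] v₀, g t < 0 := hcw (Iio_mem_nhds hga)
  have h1 : Ioo v₀ v ∈ 𝓝[>] v₀ := Ioo_mem_nhdsGT_of_mem ⟨le_rfl, hv'.1⟩
  have h2 : 𝓝[>] v₀ ≤ 𝓝[Ioo v₀ v] v₀ := nhdsWithin_le_of_mem h1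
  have hev2 : ∀ᶠ t in 𝓝[>] v₀, g t < 0 ∧ t ∈ Ioo v₀ v := by
    have he1 : ∀ᶠ t in 𝓝[>] v₀, g t < 0 := hev.filter_mono h2
    have he2 : ∀ᶠ t in 𝓝[>] v₀, t ∈ Ioo v₀ v := eventually_of_mem h1 fun x hx => hx
    exact he1.and he2
  obtain ⟨a, haneg, ha⟩ := hev2.exists
  -- derivative identity on the interior
  have hφ : ∀ p ∈ T, ContDiffAt ℝ 1 (fderiv ℝ Z) p :=
    fun p hp => (hZT p hp).fderiv_right (le_refl 2)
  have hpu_eq : ∀ p ∈ T, pu z p.1 p.2 = fderiv ℝ Z p (1, 0) :=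
    fun p hp => (slice1 ((hZT p hp).differentiableAt two_ne_zero).hasFDerivAt).deriv
  have hpv_eq : ∀ p ∈ T, pv z p.1 p.2 = fderiv ℝ Z p (0, 1) :=
    fun p hp => (slice2 ((hZT p hp).differentiableAt two_ne_zero).hasFDerivAt).deriv
  set c : ℝ → ℝ := fun t => -(F u t (z u t)) * pv z u t with hcdef
  have hcc : ContinuousOn c (Ioo v₀ v₁) := by
    have hzc : ContinuousOn (fun t => z u t) (Ioo v₀ v₁) :=
      hzs.continuousOn.comp ((continuous_const.prodMk continuous_id).continuousOn)
        (fun t ht => ⟨Ioo_subset_Icc_self hu', Ioo_subset_Icc_self ht⟩)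
    have hFco : ContinuousOn (fun t => F u t (z u t)) (Ioo v₀ v₁) :=
      hFc.comp_continuousOn
        (continuousOn_const.prodMk (continuousOn_id.prodMk hzc))
    have hφc : ContinuousOn (fun t => fderiv ℝ Z (u, t)) (Ioo v₀ v₁) := by
      intro t ht
      exact ((hφ (u, t) ⟨hu', ht⟩).continuousAt.comp
        ((continuous_const.prodMk continuous_id).continuousAt)).continuousWithinAt
    have hpvc : ContinuousOn (fun t => pv z u t) (Ioo v₀ v₁) := by
      refine (hφc.clm_apply (continuousOn_const (c := ((0:ℝ),(1:ℝ))))).congr ?_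
      intro t ht
      exact hpv_eq (u, t) ⟨hu', ht⟩
    exact hFco.neg.mul hpvc
  have hgd : ∀ t ∈ Icc a v, HasDerivAt g (c t * g t) t := by
    intro t ht
    have ht' : t ∈ Ioo v₀ v₁ := ⟨lt_of_lt_of_le ha.1 ht.1, lt_of_le_of_lt ht.2 hv'.2⟩
    have hpT : (u, t) ∈ T := ⟨hu', ht'⟩
    have hevT : ∀ᶠ t' in 𝓝 t, (u, t') ∈ T :=
      (hTo.preimage (continuous_const.prodMk continuous_id)).mem_nhds hpT
    have heqf : g =ᶠ[𝓝 t] fun t' => fderiv ℝ Z (u, t') ((1 : ℝ), (0 : ℝ)) := by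
      filter_upwards [hevT] with t' h' using hpu_eq (u, t') h'
    have hd2 : DifferentiableAt ℝ (fun t' => fderiv ℝ Z (u, t') ((1 : ℝ), (0 : ℝ))) t := by
      have hψ : DifferentiableAt ℝ (fun t' => fderiv ℝ Z (u, t')) t :=
        ((hφ (u, t) hpT).differentiableAt one_ne_zero).comp t
          (DifferentiableAt.prodMk (differentiableAt_const u) differentiableAt_id)
      exact hψ.clm_apply (differentiableAt_const _)
    have hgdiff : DifferentiableAt ℝ g t := heqf.differentiableAt_iff.mpr hd2
    have hder : HasDerivAt g (deriv g t) t := hgdiff.hasDerivAt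
    have hkey : deriv g t = c t * g t := by
      have h3 := heq u hu' t ht'
      calc deriv g t = -(F u t (z u t)) * (pu z u t * pv z u t) := h3
        _ = c t * g t := by simp only [hcdef, hgdef]; ring
    rwa [hkey] at hder
  have hsub : Icc a v ⊆ Ioo v₀ v₁ :=
    fun x hx => ⟨lt_of_lt_of_le ha.1 hx.1, lt_of_le_of_lt hx.2 hv'.2⟩
  exact ode_sign isOpen_Ioo ha.2.le hsub hcc hgd haneg

/-- Propagation of strict monotonicity for the characteristic initial value problem of
`∂_v ∂_u z = -F(u,v,z) ∂_u z ∂_v z`: if `∂_u z < 0` on the initial line `v = v₀` and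
`∂_v z > 0` on the initial line `u = u₀`, then `∂_u z < 0 < ∂_v z` throughout the
open rectangle. -/
theorem monotonicity_propagation (u₀ u₁ v₀ v₁ : ℝ) (hu : u₀ < u₁) (hv : v₀ < v₁)
    (F : ℝ → ℝ → ℝ → ℝ) (z : ℝ → ℝ → ℝ)
    (hFs : ContDiff ℝ (⊤ : ℕ∞) (fun p : ℝ × ℝ × ℝ => F p.1 p.2.1 p.2.2))
    (hzs : ContDiffOn ℝ (⊤ : ℕ∞) (fun p : ℝ × ℝ => z p.1 p.2) (Set.Icc u₀ u₁ ×ˢ Set.Icc v₀ v₁))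
    (heq : ∀ u ∈ Set.Icc u₀ u₁, ∀ v ∈ Set.Icc v₀ v₁,
      pv (fun u' v' => pu z u' v') u v = -(F u v (z u v)) * (pu z u v * pv z u v))
    (hinit_u : ∀ u ∈ Set.Ioo u₀ u₁, pu z u v₀ < 0)
    (hinit_v : ∀ v ∈ Set.Ioo v₀ v₁, 0 < pv z u₀ v) :
    ∀ u ∈ Set.Ioo u₀ u₁, ∀ v ∈ Set.Ioo v₀ v₁, pu z u v < 0 ∧ 0 < pv z u v := by
  intro u hu' v hv'
  have hzs2 : ContDiffOn ℝ 2 (fun p : ℝ × ℝ => z p.1 p.2) (Icc u₀ u₁ ×ˢ Icc v₀ v₁) :=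
    hzs.of_le (WithTop.coe_le_coe.mpr le_top)
  constructor
  · exact core u₀ u₁ v₀ v₁ hu hv F z hFs.continuous hzs2
      (fun a ha b hb => heq a (Ioo_subset_Icc_self ha) b (Ioo_subset_Icc_self hb))
      hinit_u u hu' v hv'
  · set z' : ℝ → ℝ → ℝ := fun a b => -z b a with hz'def
    set F' : ℝ → ℝ → ℝ → ℝ := fun a b w => -F b a (-w) with hF'def
    have hpu' : ∀ a b : ℝ, pu z' a b = -(pv z b a) := by
      intro a b
      show deriv (fun a' => -z b a') a = -deriv (fun v' => z b v') a
      exact deriv.fun_neg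
    have hpv' : ∀ a b : ℝ, pv z' a b = -(pu z b a) := by
      intro a b
      show deriv (fun b' => -z b' a) b = -deriv (fun u' => z u' a) b
      exact deriv.fun_neg
    have hzs' : ContDiffOn ℝ 2 (fun p : ℝ × ℝ => z' p.1 p.2) (Icc v₀ v₁ ×ˢ Icc u₀ u₁) := by
      have hsw : ContDiff ℝ 2 (fun p : ℝ × ℝ => ((p.2 : ℝ), (p.1 : ℝ))) :=
        contDiff_snd.prodMk contDiff_fst
      have hmt : Set.MapsTo (fun p : ℝ × ℝ => ((p.2 : ℝ), (p.1 : ℝ)))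
          (Icc v₀ v₁ ×ˢ Icc u₀ u₁) (Icc u₀ u₁ ×ˢ Icc v₀ v₁) := fun p hp => ⟨hp.2, hp.1⟩
      have := (hzs2.comp hsw.contDiffOn hmt).neg
      simpa [Function.comp] using this
    have hFc' : Continuous fun p : ℝ × ℝ × ℝ => F' p.1 p.2.1 p.2.2 := by
      have hg : Continuous fun p : ℝ × ℝ × ℝ => ((p.2.1, p.1, -p.2.2) : ℝ × ℝ × ℝ) := by
        fun_prop
      have := hFs.continuous.comp hg
      exact this.neg
    have heq' : ∀ a ∈ Ioo v₀ v₁, ∀ b ∈ Ioo u₀ u₁,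
        pv (fun a' b' => pu z' a' b') a b = -(F' a b (z' a b)) * (pu z' a b * pv z' a b) := by
      intro a ha b hb
      have hO : IsOpen (Ioo u₀ u₁ ×ˢ Ioo v₀ v₁) := isOpen_Ioo.prod isOpen_Ioo
      have hZO : ContDiffOn ℝ 2 (fun p : ℝ × ℝ => z p.1 p.2) (Ioo u₀ u₁ ×ˢ Ioo v₀ v₁) :=
        hzs2.mono (prod_mono Ioo_subset_Icc_self Ioo_subset_Icc_self)
      have hmix := mixed_symm (z := z) hO
        (show ((b, a) : ℝ × ℝ) ∈ Ioo u₀ u₁ ×ˢ Ioo v₀ v₁ from ⟨hb, ha⟩) hZO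
      have hL : pv (fun a' b' => pu z' a' b') a b = -(pu (fun u' v' => pv z u' v') b a) := by
        have hfun : (fun b' => pu z' a b') = fun b' => -(pv z b' a) :=
          funext fun b' => hpu' a b'
        show deriv (fun b' => pu z' a b') b = -deriv (fun u' => pv z u' a) b
        rw [hfun]
        exact deriv.fun_neg
      have hR := heq b (Ioo_subset_Icc_self hb) a (Ioo_subset_Icc_self ha)
      rw [hL, ← hmix, hR, hpu', hpv']
      show -(-F b a (z b a) * (pu z b a * pv z b a)) =
        -(-F b a (-(-z b a))) * (-pv z b a * -pu z b a)
      simp only [neg_neg]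
      ring
    have hcore := core v₀ v₁ u₀ u₁ hv hu F' z' hFc' hzs' heq'
      (fun a ha => by rw [hpu']; simpa using hinit_v a ha) v hv' u hu'
    rw [hpu'] at hcore
    linarith
end

section
/- Let u₀ < u₁, v₀ < v₁, a ∈ ℝ, and let F₁, F₂ : [u₀,u₁] × [v₀,v₁] × (-∞,a] → (0,∞) be smooth with (i) max over (u,v) of F₁(u,v,z) < min over (u,v) of F₂(u,v,z) for every fixed z ≤ a, and (ii) ∂_z F₁ ≥ 0 and ∂_z F₂ ≥ 0 everywhere. Let z₁, z₂ : [u₀,u₁] × [v₀,v₁] → (-∞,a] be smooth solutions of ∂_v∂_u z_i = -F_i(u,v,z_i) ∂_u z_i ∂_v z_i (i = 1,2) with identical characteristic initial data z₁(u,v₀) = z₂(u,v₀) = z_∖(u) and z₁(u₀,v) = z₂(u₀,v) = z_/(v), where z_∖, z_/ take values in (-∞,a), z_/(v₀) = z_∖(u₀), ∂_v z_/ > 0 on (v₀,v₁) and ∂_u z_∖ < 0 on (u₀,u₁). Then z₁ ≤ z₂ everywhere on [u₀,u₁] × [v₀,v₁]. -/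
open Set Filter Topology


lemma cp_supCont (u₀ u₁ v₀ v₁ a : ℝ) (hu : u₀ ≤ u₁) (hv : v₀ ≤ v₁) (F : ℝ → ℝ → ℝ → ℝ)
    (hF : ContinuousOn (fun p : ℝ × ℝ × ℝ => F p.1 p.2.1 p.2.2)
      (Icc u₀ u₁ ×ˢ Icc v₀ v₁ ×ˢ Iic a)) :
    ContinuousOn
      (fun t => sSup ((fun q : ℝ × ℝ => F q.1 q.2 t) '' (Icc u₀ u₁ ×ˢ Icc v₀ v₁)))
      (Iic a) := by
  set K : Set (ℝ × ℝ) := Icc u₀ u₁ ×ˢ Icc v₀ v₁ with hK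
  have hKc : IsCompact K := (isCompact_Icc).prod isCompact_Icc
  have hKne : K.Nonempty := ⟨(u₀, v₀), ⟨left_mem_Icc.2 hu, left_mem_Icc.2 hv⟩⟩
  set M : ℝ → ℝ := fun t => sSup ((fun q : ℝ × ℝ => F q.1 q.2 t) '' K) with hM
  -- slice continuity, boundedness
  have hslice : ∀ t ≤ a, ContinuousOn (fun q : ℝ × ℝ => F q.1 q.2 t) K := by
    intro t ht
    have : ContinuousOn (fun q : ℝ × ℝ => (q.1, q.2, t)) K :=
      (continuousOn_fst.prodMk (continuousOn_snd.prodMk continuousOn_const))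
    exact hF.comp this (fun q hq => ⟨hq.1, hq.2, ht⟩)
  have hbdd : ∀ t ≤ a, BddAbove ((fun q : ℝ × ℝ => F q.1 q.2 t) '' K) := fun t ht =>
    (hKc.image_of_continuousOn (hslice t ht)).bddAbove
  intro t₀ ht₀
  have ht₀' : t₀ ≤ a := ht₀
  set J : Set ℝ := Icc (t₀ - 1) a with hJ
  have hJsub : J ⊆ Iic a := fun x hx => hx.2
  set S : Set (ℝ × ℝ × ℝ) := Icc u₀ u₁ ×ˢ Icc v₀ v₁ ×ˢ J with hS
  have hSc : IsCompact S := isCompact_Icc.prod (isCompact_Icc.prod isCompact_Icc)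
  have hUC : UniformContinuousOn (fun p : ℝ × ℝ × ℝ => F p.1 p.2.1 p.2.2) S :=
    hSc.uniformContinuousOn_of_continuous
      (hF.mono (fun p hp => ⟨hp.1, hp.2.1, hJsub hp.2.2⟩))
  rw [Metric.continuousWithinAt_iff]
  intro ε hε
  obtain ⟨δ, hδ, hδ'⟩ := Metric.uniformContinuousOn_iff.1 hUC (ε / 2) (by linarith)
  refine ⟨min δ 1, by positivity, ?_⟩
  intro t ht hdist
  have htJ : t ∈ J := by
    constructor
    · have := abs_lt.1 (lt_of_lt_of_le hdist (min_le_right _ _) : |t - t₀| < 1)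
      linarith [this.1]
    · exact ht
  have ht₀J : t₀ ∈ J := ⟨by linarith, ht₀'⟩
  have hclose : ∀ q ∈ K, |F q.1 q.2 t - F q.1 q.2 t₀| ≤ ε / 2 := by
    intro q hq
    have h1 : (q.1, q.2, t) ∈ S := ⟨hq.1, hq.2, htJ⟩
    have h2 : (q.1, q.2, t₀) ∈ S := ⟨hq.1, hq.2, ht₀J⟩
    have habs : dist t t₀ < δ := lt_of_lt_of_le hdist (min_le_left _ _)
    have hd : dist ((q.1, q.2, t) : ℝ × ℝ × ℝ) (q.1, q.2, t₀) < δ := by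
      have hδpos : (0:ℝ) < δ := hδ
      simp only [Prod.dist_eq, dist_self, max_lt_iff]
      exact ⟨hδpos, hδpos, habs⟩
    exact (le_of_lt (by simpa [Real.dist_eq] using hδ' _ h1 _ h2 hd))
  -- conclude |M t - M t₀| ≤ ε/2 < ε
  have key : ∀ s s' , s ≤ a → s' ≤ a → (∀ q ∈ K, F q.1 q.2 s ≤ F q.1 q.2 s' + ε / 2) →
      M s ≤ M s' + ε / 2 := by
    intro s s' hs hs' hptw
    apply csSup_le (hKne.image _)
    rintro x ⟨q, hq, rfl⟩
    calc F q.1 q.2 s ≤ F q.1 q.2 s' + ε / 2 := hptw q hq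
    _ ≤ M s' + ε / 2 := by
        gcongr
        exact le_csSup (hbdd s' hs') (mem_image_of_mem _ hq)
  have h1 : M t ≤ M t₀ + ε / 2 :=
    key t t₀ ht (ht₀') (fun q hq => by linarith [abs_le.1 (hclose q hq) |>.1, abs_le.1 (hclose q hq) |>.2])
  have h2 : M t₀ ≤ M t + ε / 2 :=
    key t₀ t ht₀' ht (fun q hq => by linarith [abs_le.1 (hclose q hq) |>.1])
  rw [Real.dist_eq]
  rw [abs_lt]
  constructor <;> [linarith; linarith]


lemma cp_ode_sign (t₀ t₁ : ℝ) (ht : t₀ < t₁) (g c : ℝ → ℝ)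
    (hgc : ContinuousOn g (Icc t₀ t₁))
    (hcc : ContinuousOn c (Icc t₀ t₁))
    (hder : ∀ t ∈ Ioc t₀ t₁, HasDerivAt g (c t * g t) t)
    (h0 : g t₀ ≠ 0) : ∀ t ∈ Icc t₀ t₁, g t ≠ 0 := by
  by_contra hcon
  push_neg at hcon
  obtain ⟨t₂, ht₂, hz0⟩ := hcon
  have ht₂0 : t₀ < t₂ := lt_of_le_of_ne ht₂.1 (by rintro rfl; exact h0 hz0)
  obtain ⟨K, hK⟩ := (isCompact_Icc : IsCompact (Icc t₀ t₁)).exists_bound_of_continuousOn hcc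
  set f : ℝ → ℝ := fun s => g (t₂ - s) with hf
  have hfc : ContinuousOn f (Icc 0 (t₂ - t₀)) := by
    apply hgc.comp (continuous_const.sub continuous_id).continuousOn
    intro s hs
    have hmm : t₂ - s ∈ Icc t₀ t₁ := ⟨by linarith [hs.2], by linarith [hs.1, ht₂.2]⟩
    simpa using hmm
  have hfd : ∀ s ∈ Ico 0 (t₂ - t₀),
      HasDerivWithinAt f (-(c (t₂ - s) * g (t₂ - s))) (Ici s) s := by
    intro s hs
    have hmem : t₂ - s ∈ Ioc t₀ t₁ := ⟨by linarith [hs.2], by linarith [hs.1, ht₂.2]⟩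
    have h2 : HasDerivAt (fun s : ℝ => t₂ - s) (-1 : ℝ) s := by
      simpa using (hasDerivAt_id s).const_sub t₂
    have := (hder _ hmem).comp s h2
    rw [show (-(c (t₂ - s) * g (t₂ - s))) = c (t₂ - s) * g (t₂ - s) * (-1) by ring]
    exact this.hasDerivWithinAt
  have hb := norm_le_gronwallBound_of_norm_deriv_right_le (δ := 0) (K := K) (ε := 0)
      hfc hfd (by simp [hf, hz0]) ?_
  · have hend := hb (t₂ - t₀) ⟨by linarith, le_refl _⟩
    rw [gronwallBound_ε0_δ0] at hend
    have hg0 : g t₀ = 0 := by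
      have h3 : ‖f (t₂ - t₀)‖ ≤ 0 := hend
      have := norm_le_zero_iff.1 h3
      simpa [hf] using this
    exact h0 hg0
  · intro s hs
    have hmem : t₂ - s ∈ Icc t₀ t₁ := ⟨by linarith [hs.2], by linarith [hs.1, ht₂.2]⟩
    have h4 := hK _ hmem
    rw [add_zero]
    calc ‖-(c (t₂ - s) * g (t₂ - s))‖ = ‖c (t₂ - s)‖ * ‖f s‖ := by
          simp [hf, norm_mul]
    _ ≤ K * ‖f s‖ := mul_le_mul_of_nonneg_right h4 (norm_nonneg _)
lemma cp_stay_pos (t₀ t₁ : ℝ) (g : ℝ → ℝ)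
    (hgc : ContinuousOn g (Icc t₀ t₁)) (hnz : ∀ t ∈ Icc t₀ t₁, g t ≠ 0)
    (h0 : 0 < g t₀) : ∀ t ∈ Icc t₀ t₁, 0 < g t := by
  intro t htm
  by_contra hle
  push_neg at hle
  have hsub := intermediate_value_Icc' htm.1 (hgc.mono (Icc_subset_Icc le_rfl htm.2))
  obtain ⟨t', ht', hgt'⟩ := hsub ⟨hle, h0.le⟩
  exact hnz t' ⟨ht'.1, le_trans ht'.2 htm.2⟩ hgt'

lemma cp_stay_neg (t₀ t₁ : ℝ) (g : ℝ → ℝ)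
    (hgc : ContinuousOn g (Icc t₀ t₁)) (hnz : ∀ t ∈ Icc t₀ t₁, g t ≠ 0)
    (h0 : g t₀ < 0) : ∀ t ∈ Icc t₀ t₁, g t < 0 := by
  intro t htm
  by_contra hle
  push_neg at hle
  have hsub := intermediate_value_Icc htm.1 (hgc.mono (Icc_subset_Icc le_rfl htm.2))
  obtain ⟨t', ht', hgt'⟩ := hsub ⟨h0.le, hle⟩
  exact hnz t' ⟨ht'.1, le_trans ht'.2 htm.2⟩ hgt'

lemma cp_sign_aux (u₀ u₁ v₀ v₁ a : ℝ) (hu : u₀ < u₁) (hv : v₀ < v₁)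
    (F : ℝ → ℝ → ℝ → ℝ) (z : ℝ → ℝ → ℝ) (zb zs : ℝ → ℝ)
    (hFc : ContinuousOn (fun p : ℝ × ℝ × ℝ => F p.1 p.2.1 p.2.2)
      (Icc u₀ u₁ ×ˢ Icc v₀ v₁ ×ˢ Iic a))
    (hzS : ContDiffOn ℝ (⊤ : ℕ∞) (fun p : ℝ × ℝ => z p.1 p.2) (Icc u₀ u₁ ×ˢ Icc v₀ v₁))
    (hrange : ∀ u ∈ Icc u₀ u₁, ∀ v ∈ Icc v₀ v₁, z u v ≤ a)
    (heq : ∀ u ∈ Icc u₀ u₁, ∀ v ∈ Icc v₀ v₁,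
      pv (fun u' v' => pu z u' v') u v = -(F u v (z u v)) * (pu z u v * pv z u v))
    (hzb : ContDiffOn ℝ (⊤ : ℕ∞) zb (Icc u₀ u₁)) (hzsm : ContDiffOn ℝ (⊤ : ℕ∞) zs (Icc v₀ v₁))
    (hzs_inc : ∀ v ∈ Ioo v₀ v₁, 0 < deriv zs v) (hzb_dec : ∀ u ∈ Ioo u₀ u₁, deriv zb u < 0)
    (hdb : ∀ u ∈ Icc u₀ u₁, z u v₀ = zb u) (hds : ∀ v ∈ Icc v₀ v₁, z u₀ v = zs v) :
    ∀ x ∈ Ioo u₀ u₁, ∀ y ∈ Ioo v₀ v₁, pu z x y < 0 ∧ 0 < pv z x y := by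
  set R : Set (ℝ × ℝ) := Icc u₀ u₁ ×ˢ Icc v₀ v₁ with hRdef
  set O : Set (ℝ × ℝ) := Ioo u₀ u₁ ×ˢ Ioo v₀ v₁ with hOdef
  have hOopen : IsOpen O := isOpen_Ioo.prod isOpen_Ioo
  have hOR : O ⊆ R := Set.prod_mono Ioo_subset_Icc_self Ioo_subset_Icc_self
  have hRu : UniqueDiffOn ℝ R := (uniqueDiffOn_Icc hu).prod (uniqueDiffOn_Icc hv)
  set Z : ℝ × ℝ → ℝ := fun p => z p.1 p.2 with hZdef
  set Φ : (ℝ × ℝ) → (ℝ × ℝ →L[ℝ] ℝ) := fderivWithin ℝ Z R with hΦdef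
  have hΦc : ContinuousOn Φ R := hzS.continuousOn_fderivWithin hRu (by simp)
  have hmemnhds : ∀ p ∈ O, R ∈ 𝓝 p := fun p hp => mem_nhds_iff.2 ⟨O, hOR, hOopen, hp⟩
  have hZdiffAt : ∀ p ∈ O, DifferentiableAt ℝ Z p := fun p hp =>
    ((hzS.contDiffAt (hmemnhds p hp)).differentiableAt (by simp))
  have hΦeq : ∀ p ∈ O, Φ p = fderiv ℝ Z p := fun p hp => fderivWithin_of_mem_nhds (hmemnhds p hp)
  have key_u : ∀ s t : ℝ, (s, t) ∈ O → HasDerivAt (fun r => z r t) (Φ (s, t) ((1 : ℝ), (0 : ℝ))) s := by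
    intro s t hst
    have hline : HasDerivAt (fun r : ℝ => (r, t)) ((1 : ℝ), (0 : ℝ)) s :=
      (hasDerivAt_id s).prodMk (hasDerivAt_const s t)
    have h : HasFDerivAt Z (Φ (s, t)) (s, t) := by
      rw [hΦeq _ hst]; exact (hZdiffAt _ hst).hasFDerivAt
    exact h.comp_hasDerivAt s hline
  have key_v : ∀ s t : ℝ, (s, t) ∈ O → HasDerivAt (fun r => z s r) (Φ (s, t) ((0 : ℝ), (1 : ℝ))) t := by
    intro s t hst
    have hline : HasDerivAt (fun r : ℝ => (s, r)) ((0 : ℝ), (1 : ℝ)) t :=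
      (hasDerivAt_const t s).prodMk (hasDerivAt_id t)
    have h : HasFDerivAt Z (Φ (s, t)) (s, t) := by
      rw [hΦeq _ hst]; exact (hZdiffAt _ hst).hasFDerivAt
    exact h.comp_hasDerivAt t hline
  have hpu_eq : ∀ s t : ℝ, (s, t) ∈ O → pu z s t = Φ (s, t) ((1 : ℝ), (0 : ℝ)) := by
    intro s t hst; simp only [pu]; exact (key_u s t hst).deriv
  have hpv_eq : ∀ s t : ℝ, (s, t) ∈ O → pv z s t = Φ (s, t) ((0 : ℝ), (1 : ℝ)) := by
    intro s t hst; simp only [pv]; exact (key_v s t hst).deriv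
  -- boundary identifications
  have kb : ∀ s ∈ Ioo u₀ u₁, Φ (s, v₀) ((1 : ℝ), (0 : ℝ)) = deriv zb s := by
    intro s hs
    have hsI : s ∈ Icc u₀ u₁ := Ioo_subset_Icc_self hs
    have hmem : (s, v₀) ∈ R := ⟨hsI, left_mem_Icc.2 hv.le⟩
    have hdw : HasFDerivWithinAt Z (Φ (s, v₀)) R (s, v₀) :=
      (hzS.differentiableOn (by simp) _ hmem).hasFDerivWithinAt
    have hline : HasDerivWithinAt (fun t : ℝ => ((t, v₀) : ℝ × ℝ)) ((1 : ℝ), (0 : ℝ)) (Icc u₀ u₁) s :=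
      ((hasDerivAt_id s).prodMk (hasDerivAt_const s v₀)).hasDerivWithinAt
    have hmaps : MapsTo (fun t : ℝ => ((t, v₀) : ℝ × ℝ)) (Icc u₀ u₁) R := fun t ht =>
      ⟨ht, left_mem_Icc.2 hv.le⟩
    have hcomp : HasDerivWithinAt (fun t => z t v₀) (Φ (s, v₀) ((1 : ℝ), (0 : ℝ))) (Icc u₀ u₁) s :=
      by have h := hdw.comp_hasDerivWithinAt s hline hmaps; exact h
    have hcongr : HasDerivWithinAt zb (Φ (s, v₀) ((1 : ℝ), (0 : ℝ))) (Icc u₀ u₁) s :=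
      hcomp.congr (fun t ht => (hdb t ht).symm) ((hdb s hsI).symm)
    have hzbd : HasDerivWithinAt zb (deriv zb s) (Icc u₀ u₁) s :=
      (((hzb.contDiffAt (Icc_mem_nhds hs.1 hs.2)).differentiableAt (by simp)).hasDerivAt).hasDerivWithinAt
    have e1 := hcongr.derivWithin ((uniqueDiffOn_Icc hu) s hsI)
    have e2 := hzbd.derivWithin ((uniqueDiffOn_Icc hu) s hsI)
    rw [← e1, e2]
  have ks : ∀ t ∈ Ioo v₀ v₁, Φ (u₀, t) ((0 : ℝ), (1 : ℝ)) = deriv zs t := by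
    intro t htm
    have htI : t ∈ Icc v₀ v₁ := Ioo_subset_Icc_self htm
    have hmem : (u₀, t) ∈ R := ⟨left_mem_Icc.2 hu.le, htI⟩
    have hdw : HasFDerivWithinAt Z (Φ (u₀, t)) R (u₀, t) :=
      (hzS.differentiableOn (by simp) _ hmem).hasFDerivWithinAt
    have hline : HasDerivWithinAt (fun r : ℝ => ((u₀, r) : ℝ × ℝ)) ((0 : ℝ), (1 : ℝ)) (Icc v₀ v₁) t :=
      ((hasDerivAt_const t u₀).prodMk (hasDerivAt_id t)).hasDerivWithinAt
    have hmaps : MapsTo (fun r : ℝ => ((u₀, r) : ℝ × ℝ)) (Icc v₀ v₁) R := fun r hr =>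
      ⟨left_mem_Icc.2 hu.le, hr⟩
    have hcomp : HasDerivWithinAt (fun r => z u₀ r) (Φ (u₀, t) ((0 : ℝ), (1 : ℝ))) (Icc v₀ v₁) t :=
      hdw.comp_hasDerivWithinAt t hline hmaps
    have hcongr : HasDerivWithinAt zs (Φ (u₀, t) ((0 : ℝ), (1 : ℝ))) (Icc v₀ v₁) t :=
      hcomp.congr (fun r hr => (hds r hr).symm) ((hds t htI).symm)
    have hzsd : HasDerivWithinAt zs (deriv zs t) (Icc v₀ v₁) t :=
      (((hzsm.contDiffAt (Icc_mem_nhds htm.1 htm.2)).differentiableAt (by simp)).hasDerivAt).hasDerivWithinAt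
    have e1 := hcongr.derivWithin ((uniqueDiffOn_Icc hv) t htI)
    have e2 := hzsd.derivWithin ((uniqueDiffOn_Icc hv) t htI)
    rw [← e1, e2]
  -- fderiv differentiability on the interior
  have hZO : ContDiffOn ℝ (⊤ : ℕ∞) Z O := hzS.mono hOR
  have hfd : DifferentiableOn ℝ (fderiv ℝ Z) O :=
    (hZO.fderiv_of_isOpen (m := 1) hOopen (WithTop.coe_le_coe.2 le_top)).differentiableOn one_ne_zero
  have hfdAt : ∀ p ∈ O, DifferentiableAt ℝ (fderiv ℝ Z) p := fun p hp =>
    hfd.differentiableAt (hOopen.mem_nhds hp)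
  have hopen_u : ∀ t : ℝ, IsOpen {s : ℝ | (s, t) ∈ O} := fun t =>
    hOopen.preimage (continuous_id.prodMk continuous_const)
  have hopen_v : ∀ s : ℝ, IsOpen {t : ℝ | (s, t) ∈ O} := fun s =>
    hOopen.preimage (continuous_const.prodMk continuous_id)
  -- eventual identification with fderiv applied
  have hev_pu_v : ∀ s t : ℝ, (s, t) ∈ O →
      (fun r => pu z s r) =ᶠ[𝓝 t] (fun r => fderiv ℝ Z (s, r) ((1 : ℝ), (0 : ℝ))) := by
    intro s t hst
    filter_upwards [(hopen_v s).mem_nhds hst] with r hr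
    rw [hpu_eq s r hr, hΦeq _ hr]
  have hev_pv_u : ∀ s t : ℝ, (s, t) ∈ O →
      (fun r => pv z r t) =ᶠ[𝓝 s] (fun r => pv z r t) := by
    intro s t hst; rfl
  have hdiff_fd_u : ∀ s t : ℝ, (s, t) ∈ O → ∀ w : ℝ × ℝ,
      DifferentiableAt ℝ (fun r => fderiv ℝ Z (r, t) w) s := by
    intro s t hst w
    exact ((hfdAt _ hst).comp s ((differentiableAt_id).prodMk (differentiableAt_const t))).clm_apply
      (differentiableAt_const _)
  have hdiff_fd_v : ∀ s t : ℝ, (s, t) ∈ O → ∀ w : ℝ × ℝ,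
      DifferentiableAt ℝ (fun r => fderiv ℝ Z (s, r) w) t := by
    intro s t hst w
    exact ((hfdAt _ hst).comp t ((differentiableAt_const s).prodMk (differentiableAt_id))).clm_apply
      (differentiableAt_const _)
  have hev_pv_u' : ∀ s t : ℝ, (s, t) ∈ O →
      (fun r => pv z r t) =ᶠ[𝓝 s] (fun r => fderiv ℝ Z (r, t) ((0 : ℝ), (1 : ℝ))) := by
    intro s t hst
    filter_upwards [(hopen_u t).mem_nhds hst] with r hr
    rw [hpv_eq r t hr, hΦeq _ hr]
  have hD_pu_v : ∀ s t : ℝ, (s, t) ∈ O →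
      HasDerivAt (fun r => pu z s r) (deriv (fun r => pu z s r) t) t := by
    intro s t hst
    have := ((hev_pu_v s t hst).differentiableAt_iff).2 (hdiff_fd_v s t hst _)
    exact this.hasDerivAt
  have hD_pv_u : ∀ s t : ℝ, (s, t) ∈ O →
      HasDerivAt (fun r => pv z r t) (deriv (fun r => pv z r t) s) s := by
    intro s t hst
    have := ((hev_pv_u' s t hst).differentiableAt_iff).2 (hdiff_fd_u s t hst _)
    exact this.hasDerivAt
  -- Schwarz symmetry
  have hschwarz : ∀ s t : ℝ, (s, t) ∈ O →
      deriv (fun r => pv z r t) s = deriv (fun r => pu z s r) t := by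
    intro s t hst
    have hsym : IsSymmSndFDerivAt ℝ Z (s, t) :=
      (hzS.contDiffAt (hmemnhds _ hst)).isSymmSndFDerivAt
        (by rw [minSmoothness_of_isRCLikeNormedField]; exact WithTop.coe_le_coe.2 (le_top : (2 : ℕ∞) ≤ ⊤))
    have hF' : HasFDerivAt (fderiv ℝ Z) (fderiv ℝ (fderiv ℝ Z) (s, t)) (s, t) :=
      (hfdAt _ hst).hasFDerivAt
    have e1 : deriv (fun r => pv z r t) s
        = fderiv ℝ (fderiv ℝ Z) (s, t) ((1 : ℝ), (0 : ℝ)) ((0 : ℝ), (1 : ℝ)) := by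
      rw [(hev_pv_u' s t hst).deriv_eq]
      have hln : HasDerivAt (fun r : ℝ => ((r, t) : ℝ × ℝ)) ((1 : ℝ), (0 : ℝ)) s :=
        (hasDerivAt_id s).prodMk (hasDerivAt_const s t)
      have hc : HasDerivAt (fun r => fderiv ℝ Z (r, t))
          (fderiv ℝ (fderiv ℝ Z) (s, t) ((1 : ℝ), (0 : ℝ))) s := hF'.comp_hasDerivAt s hln
      have h2 := hc.clm_apply (hasDerivAt_const s (((0 : ℝ), (1 : ℝ)) : ℝ × ℝ))
      simpa using h2.deriv
    have e2 : deriv (fun r => pu z s r) t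
        = fderiv ℝ (fderiv ℝ Z) (s, t) ((0 : ℝ), (1 : ℝ)) ((1 : ℝ), (0 : ℝ)) := by
      rw [(hev_pu_v s t hst).deriv_eq]
      have hln : HasDerivAt (fun r : ℝ => ((s, r) : ℝ × ℝ)) ((0 : ℝ), (1 : ℝ)) t :=
        (hasDerivAt_const t s).prodMk (hasDerivAt_id t)
      have hc : HasDerivAt (fun r => fderiv ℝ Z (s, r))
          (fderiv ℝ (fderiv ℝ Z) (s, t) ((0 : ℝ), (1 : ℝ))) t := hF'.comp_hasDerivAt t hln
      have h2 := hc.clm_apply (hasDerivAt_const t (((1 : ℝ), (0 : ℝ)) : ℝ × ℝ))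
      simpa using h2.deriv
    rw [e1, e2, hsym.eq]
  have hzcont : ContinuousOn Z R := hzS.continuousOn
  -- now the two sign statements
  intro x hx y hy
  constructor
  · -- pu z x y < 0 : ODE in the v-direction at fixed x
    set g : ℝ → ℝ := fun r => Φ (x, r) ((1 : ℝ), (0 : ℝ)) with hg
    have hlineR : ∀ r ∈ Icc v₀ y, (x, r) ∈ R := fun r hr =>
      ⟨Ioo_subset_Icc_self hx, ⟨hr.1, le_trans hr.2 hy.2.le⟩⟩
    have hlc : ContinuousOn (fun r : ℝ => ((x, r) : ℝ × ℝ)) (Icc v₀ y) :=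
      (continuous_const.prodMk continuous_id).continuousOn
    have hgc : ContinuousOn g (Icc v₀ y) :=
      (hΦc.comp hlc hlineR).clm_apply continuousOn_const
    set c : ℝ → ℝ := fun r => -(F x r (z x r)) * Φ (x, r) ((0 : ℝ), (1 : ℝ)) with hcdef
    have hcc : ContinuousOn c (Icc v₀ y) := by
      have hzl : ContinuousOn (fun r => z x r) (Icc v₀ y) := hzcont.comp hlc hlineR
      have h1 : ContinuousOn (fun r => F x r (z x r)) (Icc v₀ y) := by
        apply hFc.comp (continuousOn_const.prodMk (continuousOn_id.prodMk hzl))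
        intro r hr
        exact ⟨(hlineR r hr).1, (hlineR r hr).2, hrange _ (hlineR r hr).1 _ (hlineR r hr).2⟩
      exact h1.neg.mul ((hΦc.comp hlc hlineR).clm_apply continuousOn_const)
    have hgd : ∀ r ∈ Ioc v₀ y, HasDerivAt g (c r * g r) r := by
      intro r hr
      have hrO : (x, r) ∈ O := ⟨hx, ⟨hr.1, lt_of_le_of_lt hr.2 hy.2⟩⟩
      have hev : (fun r' => pu z x r') =ᶠ[𝓝 r] g := by
        filter_upwards [(hopen_v x).mem_nhds hrO] with r' hr'
        rw [hpu_eq x r' hr', hg]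
      have hD := (hD_pu_v x r hrO).congr_of_eventuallyEq hev.symm
      have hval : deriv (fun r' => pu z x r') r = c r * g r := by
        have hheq := heq x (Ioo_subset_Icc_self hx) r ⟨hr.1.le, le_trans hr.2 hy.2.le⟩
        simp only [pv] at hheq
        rw [hheq, hpu_eq x r hrO, (key_v x r hrO).deriv]
        simp only [hcdef, hg]
        ring
      rw [hval] at hD
      exact hD
    have hg0 : g v₀ = deriv zb x := kb x hx
    have hg0neg : g v₀ < 0 := by rw [hg0]; exact hzb_dec x hx
    have hnz := cp_ode_sign v₀ y hy.1 g c hgc hcc hgd (ne_of_lt hg0neg)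
    have hgy := cp_stay_neg v₀ y g hgc hnz hg0neg y (right_mem_Icc.2 hy.1.le)
    rw [hpu_eq x y ⟨hx, hy⟩]
    exact hgy
  · -- 0 < pv z x y : ODE in the u-direction at fixed y
    set g : ℝ → ℝ := fun r => Φ (r, y) ((0 : ℝ), (1 : ℝ)) with hg
    have hlineR : ∀ r ∈ Icc u₀ x, (r, y) ∈ R := fun r hr =>
      ⟨⟨hr.1, le_trans hr.2 hx.2.le⟩, Ioo_subset_Icc_self hy⟩
    have hlc : ContinuousOn (fun r : ℝ => ((r, y) : ℝ × ℝ)) (Icc u₀ x) :=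
      (continuous_id.prodMk continuous_const).continuousOn
    have hgc : ContinuousOn g (Icc u₀ x) :=
      (hΦc.comp hlc hlineR).clm_apply continuousOn_const
    set c : ℝ → ℝ := fun r => -(F r y (z r y)) * Φ (r, y) ((1 : ℝ), (0 : ℝ)) with hcdef
    have hcc : ContinuousOn c (Icc u₀ x) := by
      have hzl : ContinuousOn (fun r => z r y) (Icc u₀ x) := hzcont.comp hlc hlineR
      have h1 : ContinuousOn (fun r => F r y (z r y)) (Icc u₀ x) := by
        apply hFc.comp (continuousOn_id.prodMk (continuousOn_const.prodMk hzl))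
        intro r hr
        exact ⟨(hlineR r hr).1, (hlineR r hr).2, hrange _ (hlineR r hr).1 _ (hlineR r hr).2⟩
      exact h1.neg.mul ((hΦc.comp hlc hlineR).clm_apply continuousOn_const)
    have hgd : ∀ r ∈ Ioc u₀ x, HasDerivAt g (c r * g r) r := by
      intro r hr
      have hrO : (r, y) ∈ O := ⟨⟨hr.1, lt_of_le_of_lt hr.2 hx.2⟩, hy⟩
      have hev : (fun r' => pv z r' y) =ᶠ[𝓝 r] g := by
        filter_upwards [(hopen_u y).mem_nhds hrO] with r' hr'
        rw [hpv_eq r' y hr', hg]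
      have hD := (hD_pv_u r y hrO).congr_of_eventuallyEq hev.symm
      have hval : deriv (fun r' => pv z r' y) r = c r * g r := by
        rw [hschwarz r y hrO]
        have hheq := heq r ⟨hr.1.le, le_trans hr.2 hx.2.le⟩ y (Ioo_subset_Icc_self hy)
        simp only [pv] at hheq
        rw [hheq, hpu_eq r y hrO, (key_v r y hrO).deriv]
        simp only [hcdef, hg]
        ring
      rw [hval] at hD
      exact hD
    have hg0 : g u₀ = deriv zs y := ks y hy
    have hg0pos : 0 < g u₀ := by rw [hg0]; exact hzs_inc y hy
    have hnz := cp_ode_sign u₀ x hx.1 g c hgc hcc hgd (ne_of_gt hg0pos)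
    have hgx := cp_stay_pos u₀ x g hgc hnz hg0pos x (right_mem_Icc.2 hx.1.le)
    rw [hpv_eq x y ⟨hx, hy⟩]
    exact hgx

lemma cp_rect (u₀ u₁ v₀ v₁ a : ℝ) (hu : u₀ < u₁) (hv : v₀ < v₁)
    (F : ℝ → ℝ → ℝ → ℝ) (z : ℝ → ℝ → ℝ) (m G H : ℝ → ℝ) (d : ℝ)
    (hzS : ContDiffOn ℝ (⊤ : ℕ∞) (fun p : ℝ × ℝ => z p.1 p.2) (Icc u₀ u₁ ×ˢ Icc v₀ v₁))
    (heq : ∀ u ∈ Icc u₀ u₁, ∀ v ∈ Icc v₀ v₁,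
      pv (fun u' v' => pu z u' v') u v = -(F u v (z u v)) * (pu z u v * pv z u v))
    (hG : ∀ t, HasDerivAt G (m t) t)
    (hH : ∀ t, HasDerivAt H (Real.exp (G t)) t)
    (hd : ∀ x ∈ Ioo u₀ u₁, ∀ y ∈ Ioo v₀ v₁, 0 ≤ d * (F x y (z x y) - m (z x y)))
    (hPQ : ∀ x ∈ Ioo u₀ u₁, ∀ y ∈ Ioo v₀ v₁, pu z x y ≤ 0 ∧ 0 ≤ pv z x y) :
    ∀ x ∈ Ioo u₀ u₁, ∀ y ∈ Ioo v₀ v₁,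
      0 ≤ d * ((H (z x y) - H (z x v₀)) - (H (z u₀ y) - H (z u₀ v₀))) := by
  set R : Set (ℝ × ℝ) := Icc u₀ u₁ ×ˢ Icc v₀ v₁ with hRdef
  set O : Set (ℝ × ℝ) := Ioo u₀ u₁ ×ˢ Ioo v₀ v₁ with hOdef
  have hOopen : IsOpen O := isOpen_Ioo.prod isOpen_Ioo
  have hOR : O ⊆ R := Set.prod_mono Ioo_subset_Icc_self Ioo_subset_Icc_self
  set Z : ℝ × ℝ → ℝ := fun p => z p.1 p.2 with hZdef
  have hmemnhds : ∀ p ∈ O, R ∈ 𝓝 p := fun p hp => mem_nhds_iff.2 ⟨O, hOR, hOopen, hp⟩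
  have hZdiffAt : ∀ p ∈ O, DifferentiableAt ℝ Z p := fun p hp =>
    ((hzS.contDiffAt (hmemnhds p hp)).differentiableAt (by simp))
  have hZO : ContDiffOn ℝ (⊤ : ℕ∞) Z O := hzS.mono hOR
  have hfd : DifferentiableOn ℝ (fderiv ℝ Z) O :=
    (hZO.fderiv_of_isOpen (m := 1) hOopen (WithTop.coe_le_coe.2 le_top)).differentiableOn one_ne_zero
  have hfdAt : ∀ p ∈ O, DifferentiableAt ℝ (fderiv ℝ Z) p := fun p hp =>
    hfd.differentiableAt (hOopen.mem_nhds hp)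
  have hopen_v : ∀ s : ℝ, IsOpen {t : ℝ | (s, t) ∈ O} := fun s =>
    hOopen.preimage (continuous_const.prodMk continuous_id)
  have key_u : ∀ s t : ℝ, (s, t) ∈ O → HasDerivAt (fun r => z r t) (pu z s t) s := by
    intro s t hst
    have hdiff : DifferentiableAt ℝ (fun r => z r t) s :=
      by have h := (hZdiffAt _ hst).comp s ((differentiableAt_id : DifferentiableAt ℝ id s).prodMk (differentiableAt_const t)); exact h
    simp only [pu]
    exact hdiff.hasDerivAt
  have key_v : ∀ s t : ℝ, (s, t) ∈ O → HasDerivAt (fun r => z s r) (pv z s t) t := by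
    intro s t hst
    have hdiff : DifferentiableAt ℝ (fun r => z s r) t :=
      by have h := (hZdiffAt _ hst).comp t ((differentiableAt_const s).prodMk (differentiableAt_id : DifferentiableAt ℝ id t)); exact h
    simp only [pv]
    exact hdiff.hasDerivAt
  have hpu_fd : ∀ s t : ℝ, (s, t) ∈ O → pu z s t = fderiv ℝ Z (s, t) ((1 : ℝ), (0 : ℝ)) := by
    intro s t hst
    have hline : HasDerivAt (fun r : ℝ => ((r, t) : ℝ × ℝ)) ((1 : ℝ), (0 : ℝ)) s :=
      (hasDerivAt_id s).prodMk (hasDerivAt_const s t)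
    have h := ((hZdiffAt _ hst).hasFDerivAt).comp_hasDerivAt s hline
    simp only [pu]
    exact h.deriv
  have hD_pu_v : ∀ s t : ℝ, (s, t) ∈ O →
      HasDerivAt (fun r => pu z s r) (deriv (fun r => pu z s r) t) t := by
    intro s t hst
    have hev : (fun r => pu z s r) =ᶠ[𝓝 t] (fun r => fderiv ℝ Z (s, r) ((1 : ℝ), (0 : ℝ))) := by
      filter_upwards [(hopen_v s).mem_nhds hst] with r hr
      exact hpu_fd s r hr
    have hdiffF : DifferentiableAt ℝ (fun r => fderiv ℝ Z (s, r) ((1 : ℝ), (0 : ℝ))) t :=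
      ((hfdAt _ hst).comp t ((differentiableAt_const s).prodMk (differentiableAt_id))).clm_apply
        (differentiableAt_const _)
    exact ((hev.differentiableAt_iff).2 hdiffF).hasDerivAt
  -- ψ and its derivative in the v-direction
  set ψ : ℝ → ℝ → ℝ := fun s t => Real.exp (G (z s t)) * pu z s t with hψdef
  have hWd : ∀ s t : ℝ, (s, t) ∈ O → HasDerivAt (fun r => H (z r t)) (ψ s t) s := by
    intro s t hst
    have := (hH (z s t)).comp s (key_u s t hst)
    exact this
  have hψd : ∀ s t : ℝ, (s, t) ∈ O → ∀ hs : s ∈ Ioo u₀ u₁, ∀ ht : t ∈ Ioo v₀ v₁,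
      HasDerivAt (fun r => ψ s r)
        (Real.exp (G (z s t)) * (pu z s t * pv z s t * (m (z s t) - F s t (z s t)))) t := by
    intro s t hst hs ht
    have h1 : HasDerivAt (fun r => Real.exp (G (z s r)))
        (Real.exp (G (z s t)) * (m (z s t) * pv z s t)) t :=
      ((hG (z s t)).comp t (key_v s t hst)).exp
    have h2 := hD_pu_v s t hst
    have hval : deriv (fun r => pu z s r) t = -(F s t (z s t)) * (pu z s t * pv z s t) := by
      have hheq := heq s (Ioo_subset_Icc_self hs) t (Ioo_subset_Icc_self ht)
      simp only [pv] at hheq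
      rw [hheq, (key_v s t hst).deriv]
    rw [hval] at h2
    have h3 := h1.mul h2
    have e : Real.exp (G (z s t)) * (pu z s t * pv z s t * (m (z s t) - F s t (z s t)))
        = Real.exp (G (z s t)) * (m (z s t) * pv z s t) * pu z s t
          + Real.exp (G (z s t)) * (-(F s t (z s t)) * (pu z s t * pv z s t)) := by ring
    rw [e]
    exact h3
  intro x hx y hy
  have step1 : ∀ uε ∈ Ioc u₀ x, ∀ vδ ∈ Ioc v₀ y,
      0 ≤ d * ((H (z x y) - H (z x vδ)) - (H (z uε y) - H (z uε vδ))) := by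
    intro uε huε vδ hvδ
    have hmemO : ∀ r ∈ Icc uε x, ∀ t ∈ Icc vδ y, (r, t) ∈ O := fun r hr t ht =>
      ⟨⟨lt_of_lt_of_le huε.1 hr.1, lt_of_le_of_lt hr.2 hx.2⟩,
       ⟨lt_of_lt_of_le hvδ.1 ht.1, lt_of_le_of_lt ht.2 hy.2⟩⟩
    have hmemIoo : ∀ r ∈ Icc uε x, ∀ t ∈ Icc vδ y,
        r ∈ Ioo u₀ u₁ ∧ t ∈ Ioo v₀ v₁ := fun r hr t ht =>
      ⟨(hmemO r hr t ht).1, (hmemO r hr t ht).2⟩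
    -- monotonicity of d * ψ r · on [vδ, y]
    have hψmono : ∀ r ∈ Icc uε x, d * ψ r vδ ≤ d * ψ r y := by
      intro r hr
      have hc : ContinuousOn (fun t => d * ψ r t) (Icc vδ y) := by
        intro t ht
        have hO := hmemO r hr t ht
        have hIoo := hmemIoo r hr t ht
        exact (((hψd r t hO hIoo.1 hIoo.2).const_mul d).continuousAt).continuousWithinAt
      have hdiff : DifferentiableOn ℝ (fun t => d * ψ r t) (interior (Icc vδ y)) := by
        rw [interior_Icc]
        intro t ht
        have hO := hmemO r hr t (Ioo_subset_Icc_self ht)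
        have hIoo := hmemIoo r hr t (Ioo_subset_Icc_self ht)
        exact ((hψd r t hO hIoo.1 hIoo.2).const_mul d).differentiableAt.differentiableWithinAt
      have hderiv : ∀ t ∈ interior (Icc vδ y), 0 ≤ deriv (fun t => d * ψ r t) t := by
        rw [interior_Icc]
        intro t ht
        have hO := hmemO r hr t (Ioo_subset_Icc_self ht)
        have hIoo := hmemIoo r hr t (Ioo_subset_Icc_self ht)
        rw [((hψd r t hO hIoo.1 hIoo.2).const_mul d).deriv]
        have hsg := hPQ r hIoo.1 t hIoo.2
        have hdd := hd r hIoo.1 t hIoo.2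
        have hpq : pu z r t * pv z r t ≤ 0 := mul_nonpos_of_nonpos_of_nonneg hsg.1 hsg.2
        have h5 : (0:ℝ) ≤ (-(pu z r t * pv z r t)) * (d * (F r t (z r t) - m (z r t))) :=
          mul_nonneg (neg_nonneg.2 hpq) hdd
        have h6 : d * (Real.exp (G (z r t)) * (pu z r t * pv z r t * (m (z r t) - F r t (z r t))))
            = Real.exp (G (z r t)) * ((-(pu z r t * pv z r t)) * (d * (F r t (z r t) - m (z r t)))) := by
          ring
        rw [h6]
        exact mul_nonneg (Real.exp_pos _).le h5
      have := monotoneOn_of_deriv_nonneg (convex_Icc vδ y) hc hdiff hderiv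
      exact this (left_mem_Icc.2 (le_trans hvδ.2 (le_refl y))) (right_mem_Icc.2 hvδ.2) hvδ.2
    -- A is monotone on [uε, x]
    set A : ℝ → ℝ := fun r => d * (H (z r y) - H (z r vδ)) with hA
    have hAd : ∀ r ∈ Icc uε x, HasDerivAt A (d * (ψ r y - ψ r vδ)) r := by
      intro r hr
      have h1 := hWd r y (hmemO r hr y (right_mem_Icc.2 hvδ.2))
      have h2 := hWd r vδ (hmemO r hr vδ (left_mem_Icc.2 hvδ.2))
      exact (h1.sub h2).const_mul d
    have hAc : ContinuousOn A (Icc uε x) := fun r hr =>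
      ((hAd r hr).continuousAt).continuousWithinAt
    have hAdiff : DifferentiableOn ℝ A (interior (Icc uε x)) := by
      rw [interior_Icc]
      intro r hr
      exact (hAd r (Ioo_subset_Icc_self hr)).differentiableAt.differentiableWithinAt
    have hAderiv : ∀ r ∈ interior (Icc uε x), 0 ≤ deriv A r := by
      rw [interior_Icc]
      intro r hr
      rw [(hAd r (Ioo_subset_Icc_self hr)).deriv]
      have := hψmono r (Ioo_subset_Icc_self hr)
      have h7 : d * (ψ r y - ψ r vδ) = d * ψ r y - d * ψ r vδ := by ring
      rw [h7]
      linarith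
    have hAmono := monotoneOn_of_deriv_nonneg (convex_Icc uε x) hAc hAdiff hAderiv
    have hfin := hAmono (left_mem_Icc.2 huε.2) (right_mem_Icc.2 huε.2) huε.2
    simp only [hA] at hfin
    nlinarith [hfin]
  -- take limits (uε, vδ) → (u₀, v₀)
  set s : Set (ℝ × ℝ) := Ioc u₀ x ×ˢ Ioc v₀ y with hs
  have hsub : s ⊆ R := Set.prod_mono
    (subset_trans Ioc_subset_Icc_self (Icc_subset_Icc le_rfl hx.2.le))
    (subset_trans Ioc_subset_Icc_self (Icc_subset_Icc le_rfl hy.2.le))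
  have hcl : ((u₀, v₀) : ℝ × ℝ) ∈ closure s := by
    rw [hs, closure_prod_eq, closure_Ioc (ne_of_lt hx.1), closure_Ioc (ne_of_lt hy.1)]
    exact ⟨left_mem_Icc.2 hx.1.le, left_mem_Icc.2 hy.1.le⟩
  have hne : (𝓝[s] ((u₀, v₀) : ℝ × ℝ)).NeBot := mem_closure_iff_nhdsWithin_neBot.1 hcl
  have hHc : Continuous H := by
    have : Differentiable ℝ H := fun t => (hH t).differentiableAt
    exact this.continuous
  have hzcont : ContinuousOn Z R := hzS.continuousOn
  -- tendsto of each piece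
  have hZc0 : ContinuousWithinAt Z s ((u₀, v₀) : ℝ × ℝ) :=
    (hzcont _ ⟨left_mem_Icc.2 hu.le, left_mem_Icc.2 hv.le⟩).mono hsub
  have hmap2 : MapsTo (fun q : ℝ × ℝ => ((x, q.2) : ℝ × ℝ)) s R := fun q hq =>
    ⟨Ioo_subset_Icc_self hx, (subset_trans Ioc_subset_Icc_self (Icc_subset_Icc le_rfl hy.2.le)) hq.2⟩
  have hZc2 : ContinuousWithinAt (fun q : ℝ × ℝ => Z (x, q.2)) s ((u₀, v₀) : ℝ × ℝ) :=
    ContinuousWithinAt.comp (hzcont _ ⟨Ioo_subset_Icc_self hx, left_mem_Icc.2 hv.le⟩)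
      ((continuous_const.prodMk continuous_snd).continuousWithinAt) hmap2
  have hmap3 : MapsTo (fun q : ℝ × ℝ => ((q.1, y) : ℝ × ℝ)) s R := fun q hq =>
    ⟨(subset_trans Ioc_subset_Icc_self (Icc_subset_Icc le_rfl hx.2.le)) hq.1, Ioo_subset_Icc_self hy⟩
  have hZc3 : ContinuousWithinAt (fun q : ℝ × ℝ => Z (q.1, y)) s ((u₀, v₀) : ℝ × ℝ) :=
    ContinuousWithinAt.comp (hzcont _ ⟨left_mem_Icc.2 hu.le, Ioo_subset_Icc_self hy⟩)
      ((continuous_fst.prodMk continuous_const).continuousWithinAt) hmap3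
  have htend : Tendsto (fun q : ℝ × ℝ =>
      d * ((H (z x y) - H (z x q.2)) - (H (z q.1 y) - H (z q.1 q.2))))
      (𝓝[s] ((u₀, v₀) : ℝ × ℝ))
      (𝓝 (d * ((H (z x y) - H (z x v₀)) - (H (z u₀ y) - H (z u₀ v₀))))) := by
    apply Tendsto.const_mul
    apply Tendsto.sub
    · exact tendsto_const_nhds.sub ((hHc.continuousAt.tendsto).comp hZc2)
    · exact ((hHc.continuousAt.tendsto).comp hZc3).sub ((hHc.continuousAt.tendsto).comp hZc0)
  refine ge_of_tendsto htend ?_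
  filter_upwards [self_mem_nhdsWithin] with q hq
  exact step1 q.1 hq.1 q.2 hq.2

/-- Comparison principle for characteristic initial value problems of 1+1 wave-type
equations `∂_v ∂_u z = -F(u,v,z) ∂_u z ∂_v z`: if `F₁ < F₂` uniformly on the rectangle
(for each fixed `z ≤ a`), both are non-decreasing in `z`, and `z₁, z₂` solve the
respective equations with the same monotone characteristic initial data, then
`z₁ ≤ z₂` on the rectangle. (Lemma 6.1.) -/
theorem comparison_principle (u₀ u₁ v₀ v₁ a : ℝ) (hu : u₀ < u₁) (hv : v₀ < v₁)
    (F₁ F₂ : ℝ → ℝ → ℝ → ℝ) (z₁ z₂ : ℝ → ℝ → ℝ) (zb zs : ℝ → ℝ)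
    (hF₁s : ContDiffOn ℝ (⊤ : ℕ∞) (fun p : ℝ × ℝ × ℝ => F₁ p.1 p.2.1 p.2.2)
      (Set.Icc u₀ u₁ ×ˢ Set.Icc v₀ v₁ ×ˢ Set.Iic a))
    (hF₂s : ContDiffOn ℝ (⊤ : ℕ∞) (fun p : ℝ × ℝ × ℝ => F₂ p.1 p.2.1 p.2.2)
      (Set.Icc u₀ u₁ ×ˢ Set.Icc v₀ v₁ ×ˢ Set.Iic a))
    (hF₁pos : ∀ u ∈ Set.Icc u₀ u₁, ∀ v ∈ Set.Icc v₀ v₁, ∀ z ≤ a, 0 < F₁ u v z)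
    (hF₂pos : ∀ u ∈ Set.Icc u₀ u₁, ∀ v ∈ Set.Icc v₀ v₁, ∀ z ≤ a, 0 < F₂ u v z)
    (hsep : ∀ z ≤ a, ∀ u ∈ Set.Icc u₀ u₁, ∀ v ∈ Set.Icc v₀ v₁,
      ∀ u' ∈ Set.Icc u₀ u₁, ∀ v' ∈ Set.Icc v₀ v₁, F₁ u v z < F₂ u' v' z)
    (hF₁mono : ∀ u ∈ Set.Icc u₀ u₁, ∀ v ∈ Set.Icc v₀ v₁, ∀ z ≤ a,
      0 ≤ deriv (fun t => F₁ u v t) z)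
    (hF₂mono : ∀ u ∈ Set.Icc u₀ u₁, ∀ v ∈ Set.Icc v₀ v₁, ∀ z ≤ a,
      0 ≤ deriv (fun t => F₂ u v t) z)
    (hz₁s : ContDiffOn ℝ (⊤ : ℕ∞) (fun p : ℝ × ℝ => z₁ p.1 p.2) (Set.Icc u₀ u₁ ×ˢ Set.Icc v₀ v₁))
    (hz₂s : ContDiffOn ℝ (⊤ : ℕ∞) (fun p : ℝ × ℝ => z₂ p.1 p.2) (Set.Icc u₀ u₁ ×ˢ Set.Icc v₀ v₁))
    (hz₁range : ∀ u ∈ Set.Icc u₀ u₁, ∀ v ∈ Set.Icc v₀ v₁, z₁ u v ≤ a)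
    (hz₂range : ∀ u ∈ Set.Icc u₀ u₁, ∀ v ∈ Set.Icc v₀ v₁, z₂ u v ≤ a)
    (heq₁ : ∀ u ∈ Set.Icc u₀ u₁, ∀ v ∈ Set.Icc v₀ v₁,
      pv (fun u' v' => pu z₁ u' v') u v = -(F₁ u v (z₁ u v)) * (pu z₁ u v * pv z₁ u v))
    (heq₂ : ∀ u ∈ Set.Icc u₀ u₁, ∀ v ∈ Set.Icc v₀ v₁,
      pv (fun u' v' => pu z₂ u' v') u v = -(F₂ u v (z₂ u v)) * (pu z₂ u v * pv z₂ u v))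
    (hzb : ContDiffOn ℝ (⊤ : ℕ∞) zb (Set.Icc u₀ u₁))
    (hzs : ContDiffOn ℝ (⊤ : ℕ∞) zs (Set.Icc v₀ v₁))
    (hzb_lt : ∀ u ∈ Set.Icc u₀ u₁, zb u < a)
    (hzs_lt : ∀ v ∈ Set.Icc v₀ v₁, zs v < a)
    (hcorner : zs v₀ = zb u₀)
    (hzs_inc : ∀ v ∈ Set.Ioo v₀ v₁, 0 < deriv zs v)
    (hzb_dec : ∀ u ∈ Set.Ioo u₀ u₁, deriv zb u < 0)
    (hdata₁b : ∀ u ∈ Set.Icc u₀ u₁, z₁ u v₀ = zb u)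
    (hdata₂b : ∀ u ∈ Set.Icc u₀ u₁, z₂ u v₀ = zb u)
    (hdata₁s : ∀ v ∈ Set.Icc v₀ v₁, z₁ u₀ v = zs v)
    (hdata₂s : ∀ v ∈ Set.Icc v₀ v₁, z₂ u₀ v = zs v) :
    ∀ u ∈ Set.Icc u₀ u₁, ∀ v ∈ Set.Icc v₀ v₁, z₁ u v ≤ z₂ u v := by
  -- the wedge function m between sup F₁ and inf F₂, and the renormalisation H
  set K : Set (ℝ × ℝ) := Set.Icc u₀ u₁ ×ˢ Set.Icc v₀ v₁ with hK
  have hKne : K.Nonempty := ⟨(u₀, v₀), ⟨left_mem_Icc.2 hu.le, left_mem_Icc.2 hv.le⟩⟩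
  set M : ℝ → ℝ := fun t => sSup ((fun q : ℝ × ℝ => F₁ q.1 q.2 t) '' K) with hM
  have hMc : ContinuousOn M (Iic a) :=
    cp_supCont u₀ u₁ v₀ v₁ a hu.le hv.le F₁ hF₁s.continuousOn
  set m : ℝ → ℝ := fun t => M (min t a) with hm
  have hmc : Continuous m :=
    hMc.comp_continuous (continuous_id.min continuous_const) (fun x => min_le_right x a)
  have hbdd : ∀ t ≤ a, BddAbove ((fun q : ℝ × ℝ => F₁ q.1 q.2 t) '' K) := by
    intro t ht
    have hslice : ContinuousOn (fun q : ℝ × ℝ => F₁ q.1 q.2 t) K := by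
      apply hF₁s.continuousOn.comp
        (continuousOn_fst.prodMk (continuousOn_snd.prodMk continuousOn_const))
      exact fun q hq => ⟨hq.1, hq.2, ht⟩
    exact ((isCompact_Icc.prod isCompact_Icc).image_of_continuousOn hslice).bddAbove
  have hm1 : ∀ x ∈ Set.Icc u₀ u₁, ∀ y ∈ Set.Icc v₀ v₁, ∀ t ≤ a, F₁ x y t ≤ m t := by
    intro x hx y hy t ht
    have : m t = M t := by rw [hm]; simp [min_eq_left ht]
    rw [this]
    exact le_csSup (hbdd t ht) ⟨(x, y), ⟨hx, hy⟩, rfl⟩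
  have hm2 : ∀ x ∈ Set.Icc u₀ u₁, ∀ y ∈ Set.Icc v₀ v₁, ∀ t ≤ a, m t ≤ F₂ x y t := by
    intro x hx y hy t ht
    have : m t = M t := by rw [hm]; simp [min_eq_left ht]
    rw [this]
    apply csSup_le (hKne.image _)
    rintro w ⟨q, hq, rfl⟩
    exact (hsep t ht q.1 hq.1 q.2 hq.2 x hx y hy).le
  -- primitives
  set G : ℝ → ℝ := fun t => ∫ s in a..t, m s with hG
  have hGd : ∀ t, HasDerivAt G (m t) t := fun t =>
    intervalIntegral.integral_hasDerivAt_right (hmc.intervalIntegrable _ _)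
      hmc.stronglyMeasurable.stronglyMeasurableAtFilter hmc.continuousAt
  have hGc : Continuous G := by
    have : Differentiable ℝ G := fun t => (hGd t).differentiableAt
    exact this.continuous
  set H : ℝ → ℝ := fun t => ∫ s in a..t, Real.exp (G s) with hH
  have hHd : ∀ t, HasDerivAt H (Real.exp (G t)) t := fun t =>
    intervalIntegral.integral_hasDerivAt_right
      ((Real.continuous_exp.comp hGc).intervalIntegrable _ _)
      (Real.continuous_exp.comp hGc).stronglyMeasurable.stronglyMeasurableAtFilter
      (Real.continuous_exp.comp hGc).continuousAt
  have hHmono : StrictMono H := by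
    apply strictMono_of_deriv_pos
    intro t
    rw [(hHd t).deriv]
    positivity
  -- signs
  have hsgn₁ := cp_sign_aux u₀ u₁ v₀ v₁ a hu hv F₁ z₁ zb zs hF₁s.continuousOn hz₁s hz₁range
    heq₁ hzb hzs hzs_inc hzb_dec hdata₁b hdata₁s
  have hsgn₂ := cp_sign_aux u₀ u₁ v₀ v₁ a hu hv F₂ z₂ zb zs hF₂s.continuousOn hz₂s hz₂range
    heq₂ hzb hzs hzs_inc hzb_dec hdata₂b hdata₂s
  -- the two rectangle inequalities
  have hrect₁ := cp_rect u₀ u₁ v₀ v₁ a hu hv F₁ z₁ m G H (-1) hz₁s heq₁ hGd hHd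
    (by
      intro x hx y hy
      have h1 := hm1 x (Ioo_subset_Icc_self hx) y (Ioo_subset_Icc_self hy) (z₁ x y)
        (hz₁range x (Ioo_subset_Icc_self hx) y (Ioo_subset_Icc_self hy))
      nlinarith)
    (fun x hx y hy => ⟨(hsgn₁ x hx y hy).1.le, (hsgn₁ x hx y hy).2.le⟩)
  have hrect₂ := cp_rect u₀ u₁ v₀ v₁ a hu hv F₂ z₂ m G H 1 hz₂s heq₂ hGd hHd
    (by
      intro x hx y hy
      have h2 := hm2 x (Ioo_subset_Icc_self hx) y (Ioo_subset_Icc_self hy) (z₂ x y)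
        (hz₂range x (Ioo_subset_Icc_self hx) y (Ioo_subset_Icc_self hy))
      nlinarith)
    (fun x hx y hy => ⟨(hsgn₂ x hx y hy).1.le, (hsgn₂ x hx y hy).2.le⟩)
  -- interior comparison
  have hint : ∀ x ∈ Set.Ioo u₀ u₁, ∀ y ∈ Set.Ioo v₀ v₁, z₁ x y ≤ z₂ x y := by
    intro x hx y hy
    have hxI := Ioo_subset_Icc_self hx
    have hyI := Ioo_subset_Icc_self hy
    have e1 := hrect₁ x hx y hy
    have e2 := hrect₂ x hx y hy
    rw [hdata₁b x hxI, hdata₁s y hyI, hdata₁b u₀ (left_mem_Icc.2 hu.le)] at e1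
    rw [hdata₂b x hxI, hdata₂s y hyI, hdata₂b u₀ (left_mem_Icc.2 hu.le)] at e2
    have : H (z₁ x y) ≤ H (z₂ x y) := by nlinarith
    exact (hHmono.le_iff_le).1 this
  -- extend to the closed rectangle by continuity
  intro x hx y hy
  have hcl : closure (Set.Ioo u₀ u₁ ×ˢ Set.Ioo v₀ v₁) = K := by
    rw [closure_prod_eq, closure_Ioo hu.ne, closure_Ioo hv.ne]
  have hle := le_on_closure (f := fun p : ℝ × ℝ => z₁ p.1 p.2) (g := fun p : ℝ × ℝ => z₂ p.1 p.2)
    (s := Set.Ioo u₀ u₁ ×ˢ Set.Ioo v₀ v₁)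
    (fun p hp => hint p.1 hp.1 p.2 hp.2)
    (by rw [hcl]; exact hz₁s.continuousOn)
    (by rw [hcl]; exact hz₂s.continuousOn)
  have hmem : ((x, y) : ℝ × ℝ) ∈ closure (Set.Ioo u₀ u₁ ×ˢ Set.Ioo v₀ v₁) := by
    rw [hcl]; exact ⟨hx, hy⟩
  exact hle hmem
end

section
/- Let c, C, ρ₀ > 0 and μ₀ ∈ (0,1). Let (ρ_n) and (μ_n) be sequences of positive reals such that for all 0 ≤ n ≤ N: ρ_{n+1} ≤ ρ_n + C, μ_{n+1} ≥ μ_n · exp(c / ρ_{n+1}), and μ_n < 1. Then N + 1 ≤ ((ρ₀ + C)/C) · μ₀^{-C/c}. -/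
/-!
Linear growth gives `ρ (n + 1) ≤ ρ 0 + C (n + 1)`, so `μ N ≥ μ 0 · exp (c ∑_{n < N} 1 / ρ (n + 1))`
dominates `μ 0 · exp (c ∑_{n < N} 1 / (ρ 0 + C (n + 1)))`. Telescoping `log y - log x ≤ (y - x) / x`
bounds this harmonic-type sum below by `(1 / C) log r` with `r = (ρ 0 + C (N + 1)) / (ρ 0 + C)`,
so `1 > μ N ≥ μ 0 · r ^ (c / C)`, i.e. `r < μ 0 ^ (-C / c)`, which bounds `N`.
-/

open Finset Real

theorem le_add_mul_of_forall_succ_le_add {ρ : ℕ → ℝ} {C : ℝ} {m : ℕ}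
    (h : ∀ n < m, ρ (n + 1) ≤ ρ n + C) : ρ m ≤ ρ 0 + C * m := by
  induction m with
  | zero => simp
  | succ k ih =>
    have hk := ih fun n hn => h n (by omega)
    push_cast
    linarith [h k k.lt_succ_self]

theorem mul_exp_sum_le_of_forall_mul_exp_le {μ g : ℕ → ℝ} {N : ℕ}
    (h : ∀ n < N, μ n * exp (g n) ≤ μ (n + 1)) :
    μ 0 * exp (∑ n ∈ range N, g n) ≤ μ N := by
  induction N with
  | zero => simp
  | succ k ih =>
    calc μ 0 * exp (∑ n ∈ range (k + 1), g n)
        = μ 0 * exp (∑ n ∈ range k, g n) * exp (g k) := by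
          rw [sum_range_succ, exp_add, mul_assoc]
      _ ≤ μ k * exp (g k) := by
          gcongr
          exact ih fun n hn => h n (by omega)
      _ ≤ μ (k + 1) := h k k.lt_succ_self

theorem Real.log_sub_log_le_sub_div {x y : ℝ} (hx : 0 < x) (hy : 0 < y) :
    log y - log x ≤ (y - x) / x := by
  rw [← log_div hy.ne' hx.ne', sub_div, div_self hx.ne']
  exact log_le_sub_one_of_pos (div_pos hy hx)

theorem Real.log_sub_log_le_sum_div {a : ℕ → ℝ} (ha : ∀ n, 0 < a n) (N : ℕ) :
    log (a N) - log (a 0) ≤ ∑ n ∈ range N, (a (n + 1) - a n) / a n := by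
  rw [← sum_range_sub (fun n => log (a n))]
  exact sum_le_sum fun n _ => log_sub_log_le_sub_div (ha n) (ha (n + 1))

theorem log_div_le_sum_div_add_mul {ρ₀ C : ℝ} (hC : 0 ≤ C) (hρ₀C : 0 < ρ₀ + C) (N : ℕ) :
    log ((ρ₀ + C * (N + 1)) / (ρ₀ + C)) ≤ ∑ n ∈ range N, C / (ρ₀ + C * (n + 1)) := by
  have hpos : ∀ n : ℕ, 0 < ρ₀ + C * (n + 1) := fun n => by nlinarith [n.cast_nonneg (α := ℝ)]
  have h := log_sub_log_le_sum_div (a := fun n : ℕ => ρ₀ + C * (n + 1)) hpos N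
  simp only [Nat.cast_add, Nat.cast_one, CharP.cast_eq_zero, zero_add, mul_one,
    add_sub_add_left_eq_sub, ← mul_sub, add_sub_cancel_left] at h
  rwa [log_div (hpos N).ne' hρ₀C.ne']

theorem Real.lt_rpow_neg_inv_of_mul_log_lt {r μ k : ℝ} (hr : 0 < r) (hμ : 0 < μ) (hk : 0 < k)
    (h : k * log r < -log μ) : r < μ ^ (-k⁻¹) := by
  rw [rpow_def_of_pos hμ, ← exp_log hr, exp_lt_exp, mul_neg, ← neg_mul, ← div_eq_mul_inv,
    lt_div_iff₀ hk, mul_comm]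
  exact h

theorem discrete_blowup_general (c C : ℝ) (hc : 0 < c) (hC : 0 < C)
    (ρ μ : ℕ → ℝ) (N : ℕ)
    (hρpos : ∀ n, 0 < ρ n) (hμpos : ∀ n, 0 < μ n)
    (hρ : ∀ n ≤ N, ρ (n + 1) ≤ ρ n + C)
    (hμ : ∀ n ≤ N, μ n * Real.exp (c / ρ (n + 1)) ≤ μ (n + 1))
    (hμlt : ∀ n ≤ N, μ n < 1) :
    (N : ℝ) + 1 ≤ ((ρ 0 + C) / C) * (μ 0) ^ (-(C / c)) := by
  have hρ0 := hρpos 0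
  have hμ0 := hμpos 0
  have hρlin : ∀ n < N, ρ (n + 1) ≤ ρ 0 + C * (n + 1) := fun n hn => by
    simpa using le_add_mul_of_forall_succ_le_add (m := n + 1) fun k hk => hρ k (by omega)
  set r := (ρ 0 + C * (N + 1)) / (ρ 0 + C) with hr_def
  have hsum : c / C * log r ≤ ∑ n ∈ range N, c / ρ (n + 1) :=
    calc c / C * log r ≤ c / C * ∑ n ∈ range N, C / (ρ 0 + C * (n + 1)) := by
          gcongr
          exact log_div_le_sum_div_add_mul hC.le (by positivity) N
      _ = ∑ n ∈ range N, c / (ρ 0 + C * (n + 1)) := by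
          rw [mul_sum]
          exact sum_congr rfl fun n _ => by field_simp
      _ ≤ ∑ n ∈ range N, c / ρ (n + 1) :=
          sum_le_sum fun n hn => div_le_div_of_nonneg_left hc.le (hρpos _)
            (hρlin n (mem_range.mp hn))
  have hgrowth : μ 0 * exp (∑ n ∈ range N, c / ρ (n + 1)) < 1 :=
    (mul_exp_sum_le_of_forall_mul_exp_le fun n hn => hμ n hn.le).trans_lt (hμlt N le_rfl)
  have hlog : c / C * log r < -log (μ 0) := by
    have := (log_lt_log (by positivity) hgrowth).trans_eq log_one
    rw [log_mul hμ0.ne' (exp_pos _).ne', log_exp] at this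
    linarith
  have hr : r < μ 0 ^ (-(C / c)) := by
    simpa only [inv_div] using lt_rpow_neg_inv_of_mul_log_lt (by positivity) hμ0 (by positivity) hlog
  calc (N : ℝ) + 1 ≤ (ρ 0 + C) / C * r := by
        rw [hr_def, div_mul_div_cancel₀' (by positivity : ρ 0 + C ≠ 0), le_div_iff₀ hC]
        linarith
    _ ≤ (ρ 0 + C) / C * μ 0 ^ (-(C / c)) := by gcongr

/-- Discrete Grönwall-type blow-up lemma: if `ρ` grows at most linearly
(`ρ_{n+1} ≤ ρ_n + C`) while `μ` grows multiplicatively (`μ_{n+1} ≥ μ_n exp(c/ρ_{n+1})`)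
and `μ_n` stays below `1` for `n ≤ N`, then `N + 1 ≤ ((ρ₀ + C)/C) · μ₀^{-C/c}`. -/
theorem discrete_blowup (c C : ℝ) (hc : 0 < c) (hC : 0 < C)
    (ρ μ : ℕ → ℝ) (N : ℕ)
    (hρ0 : 0 < ρ 0) (hμ0 : μ 0 ∈ Set.Ioo (0 : ℝ) 1)
    (hρpos : ∀ n, 0 < ρ n) (hμpos : ∀ n, 0 < μ n)
    (hρ : ∀ n ≤ N, ρ (n + 1) ≤ ρ n + C)
    (hμ : ∀ n ≤ N, μ n * Real.exp (c / ρ (n + 1)) ≤ μ (n + 1))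
    (hμlt : ∀ n ≤ N, μ n < 1) :
    (N : ℝ) + 1 ≤ ((ρ 0 + C) / C) * (μ 0) ^ (-(C / c)) :=
  discrete_blowup_general c C hc hC ρ μ N hρpos hμpos hρ hμ hμlt
end
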